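/- arXiv:1810.12783 — 9 statements merged into one kernel-verified Lean document; each statement's English description precedes it below -/
import Mathlib

section
/- Let φ : ℝⁿ → ℝ be C^{1,1} (differentiable with locally Lipschitz gradient) and pseudoconvex. Then for all x, u ∈ ℝⁿ with ⟨∇φ(x), u⟩ = 0, every z in the Fréchet subdifferential of the function y ↦ ⟨u, ∇φ(y)⟩ at x satisfies ⟨z, u⟩ ≥ 0. -/
local notation "⟪" x ", " y "⟫" => (inner ℝ x y : ℝ)

def FrechetSubdiff {E : Type*} [NormedAddCommGroup E] [InnerProductSpace ℝ E]
    (f : E → ℝ) (x : E) : Set E :=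
  {z | ∀ ε > 0, ∀ᶠ y in nhds x, -(ε * ‖y - x‖) ≤ f y - f x - ⟪z, y - x⟫}

def MordukhovichSubdiff {E : Type*} [NormedAddCommGroup E] [InnerProductSpace ℝ E]
    (f : E → ℝ) (x : E) : Set E :=
  {z | ∃ xs zs : ℕ → E,
    (∀ k, zs k ∈ FrechetSubdiff f (xs k)) ∧
    Filter.Tendsto xs Filter.atTop (nhds x) ∧
    Filter.Tendsto (fun k => f (xs k)) Filter.atTop (nhds (f x)) ∧
    Filter.Tendsto zs Filter.atTop (nhds z)}

theorem stmt_6 (n : ℕ) (φ : EuclideanSpace ℝ (Fin n) → ℝ)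
    (hφ : Differentiable ℝ φ) (hlip : LocallyLipschitz (gradient φ))
    (hpc : ∀ x y : EuclideanSpace ℝ (Fin n), φ y < φ x → ⟪gradient φ x, y - x⟫ < 0) :
    ∀ x u : EuclideanSpace ℝ (Fin n), ⟪gradient φ x, u⟫ = 0 →
      ∀ z ∈ FrechetSubdiff (fun y => ⟪u, gradient φ y⟫) x, 0 ≤ ⟪z, u⟫ := by
  intro x u hxu z hz
  by_contra hneg
  push_neg at hneg
  have hu : u ≠ 0 := by
    intro h; rw [h] at hneg; simp at hneg
  have hun : (0:ℝ) < ‖u‖ := norm_pos_iff.mpr hu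
  set c : ℝ := ⟪z, u⟫ with hc
  -- x is a global minimum along the line t ↦ x + t • u
  have hmin : ∀ t : ℝ, φ x ≤ φ (x + t • u) := by
    intro t
    by_contra h
    push_neg at h
    have h2 := hpc x (x + t • u) h
    rw [add_sub_cancel_left, real_inner_smul_right, hxu, mul_zero] at h2
    exact lt_irrefl 0 h2
  set ε : ℝ := -c / (2 * ‖u‖) with hε
  have hεpos : 0 < ε := by
    apply div_pos (by linarith) (by positivity)
  obtain ⟨δ, hδ, hδ'⟩ := Metric.eventually_nhds_iff.mp (hz ε hεpos)
  set a : ℝ := -(δ / (2 * ‖u‖)) with ha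
  have hapos : a < 0 := by
    rw [ha]; simp only [neg_neg, neg_lt_zero]; positivity
  -- derivative of h(t) = φ (x + t • u)
  have hder : ∀ t : ℝ, HasDerivAt (fun s => φ (x + s • u))
      ⟪gradient φ (x + t • u), u⟫ t := by
    intro t
    have h1 : HasDerivAt (fun s : ℝ => x + s • u) u t := by
      simpa using ((hasDerivAt_id t).smul_const u).const_add x
    have h2 := ((hφ (x + t • u)).hasGradientAt).hasFDerivAt
    have := h2.comp_hasDerivAt t h1
    simpa [Function.comp_def] using this
  -- derivative positive on (a, 0)
  have hpos : ∀ t ∈ Set.Ioo a (0:ℝ), 0 < ⟪gradient φ (x + t • u), u⟫ := by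
    intro t ht
    have hdist : dist (x + t • u) x < δ := by
      rw [dist_eq_norm, add_sub_cancel_left, norm_smul, Real.norm_eq_abs,
        abs_of_neg ht.2]
      have : -t < δ / (2 * ‖u‖) := by
        have := ht.1
        rw [ha] at this
        linarith
      calc -t * ‖u‖ < δ / (2 * ‖u‖) * ‖u‖ := by
            exact mul_lt_mul_of_pos_right this hun
        _ = δ / 2 := by field_simp
        _ < δ := by linarith
    have key := hδ' hdist
    have hx0 : ⟪u, gradient φ x⟫ = 0 := by rw [real_inner_comm]; exact hxu
    simp only [] at key
    rw [add_sub_cancel_left] at key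
    rw [hx0, real_inner_smul_right, norm_smul, Real.norm_eq_abs, abs_of_neg ht.2] at key
    -- key : -(ε * (-t * ‖u‖)) ≤ ⟪u, gradient φ (x + t • u)⟫ - 0 - t * c
    rw [real_inner_comm]
    have hεu : ε * ‖u‖ = -c / 2 := by
      rw [hε]; field_simp
    nlinarith [ht.2, hneg, key]
  -- strict monotonicity on [a, 0]
  have hmono : StrictMonoOn (fun s => φ (x + s • u)) (Set.Icc a 0) := by
    apply strictMonoOn_of_deriv_pos (convex_Icc a 0)
    · exact (hφ.continuous.comp (by continuity)).continuousOn
    · intro t ht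
      rw [interior_Icc] at ht
      rw [(hder t).deriv]
      exact hpos t ht
  have h1 : φ (x + a • u) < φ (x + (0:ℝ) • u) :=
    hmono (Set.left_mem_Icc.mpr hapos.le) (Set.right_mem_Icc.mpr hapos.le) hapos
  rw [zero_smul, add_zero] at h1
  exact absurd (hmin a) (not_le.mpr h1)
end

section
/- Define φ : ℝ → ℝ by φ(x) = ½ x² sign(x) (i.e., φ(x) = x²/2 for x ≥ 0 and φ(x) = -x²/2 for x < 0). Then φ is differentiable with ∇φ(x) = |x| for all x, the gradient is Lipschitz, φ is quasiconvex, and for u = 1 the element z = -1 lies in the Fréchet subdifferential of the function y ↦ u·∇φ(y) = |y| at 0 while z·u = -1 < 0. -/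
local notation "⟪" x ", " y "⟫" => (inner ℝ x y : ℝ)

private lemma aux_hasDerivAt (φ : ℝ → ℝ)
    (hφdef : ∀ x : ℝ, φ x = if 0 ≤ x then x ^ 2 / 2 else -(x ^ 2) / 2) (x : ℝ) :
    HasDerivAt φ |x| x := by
  rcases lt_trichotomy x 0 with hx | hx | hx
  · have h : HasDerivAt (fun y : ℝ => -(y ^ 2) / 2) (-x) x := by
      have h2 : HasDerivAt (fun y : ℝ => y ^ 2) (2 * x) x := by
        simpa using hasDerivAt_pow 2 x
      simpa [neg_div] using (h2.neg.div_const 2).congr_deriv (by ring)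
    have heq : φ =ᶠ[nhds x] fun y : ℝ => -(y ^ 2) / 2 := by
      filter_upwards [IsOpen.mem_nhds isOpen_Iio hx] with y hy
      rw [hφdef y, if_neg (not_le.mpr hy)]
    have := h.congr_of_eventuallyEq heq
    simpa [abs_of_neg hx] using this
  · subst hx
    rw [hasDerivAt_iff_tendsto_slope]
    have heq : slope φ 0 =ᶠ[nhdsWithin 0 {(0:ℝ)}ᶜ] fun y => |y| / 2 := by
      filter_upwards [self_mem_nhdsWithin] with y hy
      have hy' : y ≠ 0 := hy
      rcases lt_or_ge y 0 with h | h
      · rw [slope_def_field, hφdef y, hφdef 0, if_neg (not_le.mpr h), if_pos le_rfl,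
          abs_of_neg h]
        field_simp
        ring
      · rw [slope_def_field, hφdef y, hφdef 0, if_pos h, if_pos le_rfl, abs_of_nonneg h]
        field_simp
        ring
    rw [Filter.tendsto_congr' heq]
    have : Filter.Tendsto (fun y : ℝ => |y| / 2) (nhds 0) (nhds 0) := by
      simpa using (((_root_.continuous_abs : Continuous fun y : ℝ => |y|).div_const 2).tendsto 0)
    simpa [abs_zero] using this.mono_left nhdsWithin_le_nhds
  · have h : HasDerivAt (fun y : ℝ => y ^ 2 / 2) x x := by
      have h2 : HasDerivAt (fun y : ℝ => y ^ 2) (2 * x) x := by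
        simpa using hasDerivAt_pow 2 x
      simpa using (h2.div_const 2).congr_deriv (by ring)
    have heq : φ =ᶠ[nhds x] fun y : ℝ => y ^ 2 / 2 := by
      filter_upwards [IsOpen.mem_nhds isOpen_Ioi hx] with y hy
      rw [hφdef y, if_pos (le_of_lt hy)]
    have := h.congr_of_eventuallyEq heq
    simpa [abs_of_pos hx] using this

theorem stmt_7 (φ : ℝ → ℝ)
    (hφdef : ∀ x : ℝ, φ x = if 0 ≤ x then x ^ 2 / 2 else -(x ^ 2) / 2) :
    Differentiable ℝ φ ∧ (∀ x : ℝ, deriv φ x = |x|) ∧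
    LipschitzWith 1 (deriv φ) ∧
    (∀ x y : ℝ, ∀ lam ∈ Set.Icc (0:ℝ) 1,
      φ ((1 - lam) * x + lam * y) ≤ max (φ x) (φ y)) ∧
    (-1 : ℝ) ∈ FrechetSubdiff (fun y => (1 : ℝ) * deriv φ y) 0 ∧
    (-1 : ℝ) * 1 < 0 := by
  have hD : ∀ x, HasDerivAt φ |x| x := aux_hasDerivAt φ hφdef
  have hderiv : ∀ x, deriv φ x = |x| := fun x => (hD x).deriv
  have hdiff : Differentiable ℝ φ := fun x => (hD x).differentiableAt
  refine ⟨hdiff, hderiv, ?_, ?_, ?_, by norm_num⟩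
  · have h : deriv φ = fun x => |x| := funext hderiv
    rw [h]
    intro a b
    simp only [edist_dist, Real.dist_eq, ENNReal.coe_one, one_mul]
    exact ENNReal.ofReal_le_ofReal (abs_abs_sub_abs_le_abs_sub a b)
  · have hmono : Monotone φ := by
      refine monotone_of_deriv_nonneg hdiff ?_
      intro x; rw [hderiv]; exact abs_nonneg x
    rintro x y lam ⟨h0, h1⟩
    have hle : (1 - lam) * x + lam * y ≤ max x y := by
      calc (1-lam)*x + lam*y ≤ (1-lam)*max x y + lam*max x y := by
            refine add_le_add ?_ ?_
            · exact mul_le_mul_of_nonneg_left (le_max_left _ _) (by linarith)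
            · exact mul_le_mul_of_nonneg_left (le_max_right _ _) h0
        _ = max x y := by ring
    calc φ _ ≤ φ (max x y) := hmono hle
      _ = max (φ x) (φ y) := hmono.map_max
  · intro ε hε
    filter_upwards with y
    simp only [hderiv, sub_zero, abs_zero, one_mul, mul_zero, Real.norm_eq_abs,
      real_inner_smul_left]
    have h1 : ⟪(-1:ℝ), y⟫ = -y := by
      simp [real_inner_comm]
    rw [h1]
    nlinarith [mul_nonneg hε.le (abs_nonneg y), neg_abs_le y]
end

section
/- Let f : ℝⁿ → ℝ be Lipschitz continuous on an open set containing the segment [a, b]. Then there exist c ∈ [a, b) and x* in the Mordukhovich (limiting) subdifferential of f at c such that ⟨x*, b - a⟩ ≥ f(b) - f(a). -/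
local notation "⟪" x ", " y "⟫" => (inner ℝ x y : ℝ)

open Filter Metric Set Bornology

lemma frechet_shift {E : Type*} [NormedAddCommGroup E] [InnerProductSpace ℝ E]
    (f : E → ℝ) (v : E) (x z : E)
    (hz : z ∈ FrechetSubdiff (fun y => f y - ⟪v, y⟫) x) :
    z + v ∈ FrechetSubdiff f x := by
  intro ε hε
  filter_upwards [hz ε hε] with y hy
  have e : f y - f x - ⟪z + v, y - x⟫
      = (f y - ⟪v, y⟫) - (f x - ⟪v, x⟫) - ⟪z, y - x⟫ := by
    simp only [inner_add_left, inner_sub_right]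
    ring
  rw [e]; exact hy

lemma mord_shift {E : Type*} [NormedAddCommGroup E] [InnerProductSpace ℝ E]
    (f : E → ℝ) (v : E) (c z : E)
    (hz : z ∈ MordukhovichSubdiff (fun y => f y - ⟪v, y⟫) c) :
    z + v ∈ MordukhovichSubdiff f c := by
  obtain ⟨xs, zs, hF, hx, hfx, hzs⟩ := hz
  refine ⟨xs, fun k => zs k + v, fun k => frechet_shift f v (xs k) (zs k) (hF k), hx, ?_,
    hzs.add tendsto_const_nhds⟩
  have h2 : Filter.Tendsto (fun k => ⟪v, xs k⟫) Filter.atTop (nhds ⟪v, c⟫) :=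
    (Filter.Tendsto.inner tendsto_const_nhds hx)
  have := hfx.add h2
  simpa using this

set_option maxHeartbeats 4000000 in
theorem stmt_9 (n : ℕ) (f : EuclideanSpace ℝ (Fin n) → ℝ)
    (a b : EuclideanSpace ℝ (Fin n)) (U : Set (EuclideanSpace ℝ (Fin n)))
    (hU : IsOpen U) (hseg : segment ℝ a b ⊆ U) (K : NNReal)
    (hf : LipschitzOnWith K f U) :
    ∃ t ∈ Set.Ico (0:ℝ) 1, ∃ z ∈ MordukhovichSubdiff f (a + t • (b - a)),
      f b - f a ≤ ⟪z, b - a⟫ := by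
  classical
  set v : EuclideanSpace ℝ (Fin n) := ((f b - f a) / ‖b - a‖ ^ 2) • (b - a) with hvdef
  set h : EuclideanSpace ℝ (Fin n) → ℝ := fun x => f x - ⟪v, x⟫ with hhdef
  set S : Set (EuclideanSpace ℝ (Fin n)) := segment ℝ a b with hSdef
  have hSne : S.Nonempty := ⟨a, left_mem_segment ℝ a b⟩
  have hScompact : IsCompact S := by
    rw [hSdef, segment_eq_image']
    exact isCompact_Icc.image (continuous_const.add (continuous_id.smul continuous_const))
  have hSconv : Convex ℝ S := convex_segment a b
  have hSclosed : IsClosed S := hScompact.isClosed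
  have hScomplete : IsComplete S := hSclosed.isComplete
  have hfc : ContinuousOn f U := hf.continuousOn
  have hinner_cont : Continuous fun x : EuclideanSpace ℝ (Fin n) => ⟪v, x⟫ :=
    Continuous.inner continuous_const continuous_id
  have hhc : ContinuousOn h U := hfc.sub hinner_cont.continuousOn
  -- the tilt satisfies ⟪v, b - a⟫ = f b - f a
  have hvba : ⟪v, b - a⟫ = f b - f a := by
    by_cases hab : a = b
    · simp [hab]
    · have hba : b - a ≠ 0 := sub_ne_zero.2 (Ne.symm hab)
      have hn : ‖b - a‖ ≠ 0 := norm_ne_zero_iff.2 hba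
      rw [hvdef, real_inner_smul_left, real_inner_self_eq_norm_sq]
      field_simp
  have hab_eq : h a = h b := by
    have : ⟪v, b⟫ - ⟪v, a⟫ = f b - f a := by
      rw [← inner_sub_right]; exact hvba
    simp only [hhdef]; linarith
  -- Lipschitz bound for h
  set L : ℝ := (K : ℝ) + ‖v‖ + 1 with hLdef
  have hLpos : 0 < L := by positivity
  have hLip : ∀ x ∈ U, ∀ y ∈ U, h x - h y ≤ L * ‖x - y‖ := by
    intro x hx y hy
    have h1 : |f x - f y| ≤ (K : ℝ) * ‖x - y‖ := by
      have := hf.dist_le_mul x hx y hy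
      rwa [Real.dist_eq, dist_eq_norm] at this
    have h2 : |⟪v, y⟫ - ⟪v, x⟫| ≤ ‖v‖ * ‖x - y‖ := by
      rw [← inner_sub_right]
      calc |⟪v, y - x⟫| ≤ ‖v‖ * ‖y - x‖ := abs_real_inner_le_norm v (y - x)
        _ = ‖v‖ * ‖x - y‖ := by rw [norm_sub_rev]
    have h3 := abs_le.1 h1
    have h4 := abs_le.1 h2
    have h5 : (0:ℝ) ≤ ‖x - y‖ := norm_nonneg _
    simp only [hhdef]
    nlinarith
  -- minimizer of h over the segment, chosen ≠ b when a ≠ b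
  obtain ⟨c0', hc0'S, hc0'min⟩ := hScompact.exists_isMinOn hSne (hhc.mono hseg)
  set c0 : EuclideanSpace ℝ (Fin n) := if c0' = b then a else c0' with hc0def
  have hc0S : c0 ∈ S := by
    rw [hc0def]; split
    · exact left_mem_segment ℝ a b
    · exact hc0'S
  have hc0min : ∀ x ∈ S, h c0 ≤ h x := by
    intro x hx
    rw [hc0def]; split
    · rename_i hb
      rw [hab_eq, ← hb]
      exact hc0'min hx
    · exact hc0'min hx
  have hc0b : a ≠ b → c0 ≠ b := by
    intro hab
    rw [hc0def]; split
    · exact hab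
    · assumption
  have hc0U : c0 ∈ U := hseg hc0S
  -- radius
  obtain ⟨r, hrpos, hrU, hrb⟩ :
      ∃ r > (0:ℝ), closedBall c0 r ⊆ U ∧ (a ≠ b → 3 * r < dist b c0) := by
    obtain ⟨r1, hr1, hball⟩ := Metric.isOpen_iff.1 hU c0 hc0U
    by_cases hab : a = b
    · exact ⟨r1 / 2, by positivity,
        (closedBall_subset_ball (by linarith)).trans hball, fun hc => absurd hab hc⟩
    · have hbc0 : 0 < dist b c0 := by
        rw [dist_pos]; exact Ne.symm (hc0b hab)
      refine ⟨min (r1 / 2) (dist b c0 / 4), by positivity, ?_, ?_⟩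
      · exact (closedBall_subset_ball (lt_of_le_of_lt (min_le_left _ _) (by linarith))).trans hball
      · intro _
        have := min_le_right (r1 / 2) (dist b c0 / 4)
        linarith
  -- projection onto the segment
  have proj : ∀ x : EuclideanSpace ℝ (Fin n), ∃ p ∈ S, ‖x - p‖ = infDist x S ∧ ∀ w ∈ S, ⟪x - p, w - p⟫ ≤ 0 := by
    intro x
    obtain ⟨p, hpS, hp⟩ := exists_norm_eq_iInf_of_complete_convex hSne hScomplete hSconv x
    refine ⟨p, hpS, ?_, (norm_eq_iInf_iff_real_inner_le_zero hSconv hpS).1 hp⟩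
    rw [hp, Metric.infDist_eq_iInf]
    simp_rw [dist_eq_norm]
  choose p hpS hpdist hpvar using proj
  have hd_nonneg : ∀ x : EuclideanSpace ℝ (Fin n), 0 ≤ infDist x S := fun x => Metric.infDist_nonneg
  -- penalized functions
  set σ : ℕ → ℝ := fun k => L ^ 2 / (2 * r ^ 2 * (k + 1)) with hσdef
  have hσpos : ∀ k, 0 < σ k := by
    intro k
    have : (0:ℝ) < (k:ℝ) + 1 := by positivity
    rw [hσdef]; positivity
  set F : ℕ → EuclideanSpace ℝ (Fin n) → ℝ := fun k x =>
    h x + ((k : ℝ) + 1) * infDist x S ^ 2 + σ k * ‖x - c0‖ ^ 2 with hFdef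
  have hFcont : ∀ k, ContinuousOn (F k) (closedBall c0 r) := by
    intro k
    apply ((hhc.mono hrU).add (Continuous.continuousOn
      (continuous_const.mul ((Metric.continuous_infDist_pt S).pow 2)))).add
    exact Continuous.continuousOn
      (continuous_const.mul (((continuous_id.sub continuous_const).norm).pow 2))
  have key : ∀ k : ℕ, ∃ x ∈ closedBall c0 r, ∀ y ∈ closedBall c0 r, F k x ≤ F k y := by
    intro k
    obtain ⟨x, hx, hmin⟩ := (isCompact_closedBall c0 r).exists_isMinOn
      ⟨c0, mem_closedBall_self hrpos.le⟩ (hFcont k)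
    exact ⟨x, hx, fun y hy => hmin hy⟩
  choose x hxball hxmin using key
  -- basic inequality at the minimizer
  have star : ∀ k : ℕ, ((k:ℝ)+1) * infDist (x k) S ^ 2 + σ k * ‖x k - c0‖ ^ 2
      ≤ L * infDist (x k) S := by
    intro k
    have h1 : F k (x k) ≤ F k c0 := hxmin k c0 (mem_closedBall_self hrpos.le)
    have h2 : F k c0 = h c0 := by
      simp [hFdef, Metric.infDist_zero_of_mem hc0S]
    have h3 : h c0 ≤ h (p (x k)) := hc0min _ (hpS (x k))
    have h4 : h (p (x k)) - h (x k) ≤ L * ‖p (x k) - x k‖ :=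
      hLip _ (hseg (hpS (x k))) _ (hrU (hxball k))
    have h5 : ‖p (x k) - x k‖ = infDist (x k) S := by
      rw [norm_sub_rev]; exact hpdist (x k)
    have h6 : F k (x k) = h (x k) + ((k:ℝ)+1) * infDist (x k) S ^ 2
        + σ k * ‖x k - c0‖ ^ 2 := rfl
    rw [h2, h6] at h1
    rw [h5] at h4
    linarith
  have hdL : ∀ k : ℕ, ((k:ℝ)+1) * infDist (x k) S ≤ L := by
    intro k
    have hs := star k
    have hd0 : 0 ≤ infDist (x k) S := hd_nonneg (x k)
    have hq : (0:ℝ) ≤ σ k * ‖x k - c0‖ ^ 2 := by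
      have := (hσpos k).le; positivity
    rcases eq_or_lt_of_le hd0 with he | hlt
    · rw [← he]; simpa using hLpos.le
    · have h7 : ((k:ℝ)+1) * infDist (x k) S * infDist (x k) S ≤ L * infDist (x k) S := by
        nlinarith
      exact le_of_mul_le_mul_right h7 hlt
  have hxint : ∀ k : ℕ, ‖x k - c0‖ < r := by
    intro k
    have hle : ‖x k - c0‖ ≤ r := by
      have := mem_closedBall.1 (hxball k); rwa [dist_eq_norm] at this
    rcases lt_or_eq_of_le hle with hlt | heq
    · exact hlt
    · exfalso
      have hs := star k
      rw [heq] at hs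
      have hσr : σ k * (2 * r ^ 2 * ((k:ℝ) + 1)) = L ^ 2 := by
        rw [hσdef]
        have hk1 : ((k:ℝ) + 1) ≠ 0 := by positivity
        field_simp
      have hd0 : 0 ≤ infDist (x k) S := hd_nonneg (x k)
      have hk1 : (0:ℝ) < (k:ℝ) + 1 := by positivity
      nlinarith [mul_le_mul_of_nonneg_left hs (by positivity : (0:ℝ) ≤ 4*((k:ℝ)+1)),
        sq_nonneg (2*(((k:ℝ)+1) * infDist (x k) S) - L), mul_pos hLpos hLpos]
  -- the explicit penalty gradients are Frechet subgradients of h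
  set w : ℕ → EuclideanSpace ℝ (Fin n) := fun k =>
    (2 * ((k:ℝ)+1)) • (p (x k) - x k) + (2 * σ k) • (c0 - x k) with hwdef
  have hwF : ∀ k : ℕ, w k ∈ FrechetSubdiff h (x k) := by
    intro k ε hε
    set M : ℝ := ((k:ℝ)+1) + σ k with hMdef
    have hM : 0 < M := add_pos (by positivity) (hσpos k)
    have hball_nhds : Metric.ball c0 r ∈ nhds (x k) :=
      Metric.isOpen_ball.mem_nhds (by rw [mem_ball, dist_eq_norm]; exact hxint k)
    have hsmall : Metric.ball (x k) (ε / M) ∈ nhds (x k) :=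
      Metric.ball_mem_nhds _ (by positivity)
    filter_upwards [hball_nhds, hsmall] with y hy1 hy2
    have hFy : F k (x k) ≤ F k y := hxmin k y (Metric.ball_subset_closedBall hy1)
    have e1 : ‖y - p (x k)‖ ^ 2
        = ‖y - x k‖ ^ 2 + 2 * ⟪y - x k, x k - p (x k)⟫ + ‖x k - p (x k)‖ ^ 2 := by
      have h0 : (y - x k) + (x k - p (x k)) = y - p (x k) := by abel
      rw [← h0, norm_add_sq_real]
    have e2 : ‖y - c0‖ ^ 2 = ‖y - x k‖ ^ 2 + 2 * ⟪y - x k, x k - c0⟫ + ‖x k - c0‖ ^ 2 := by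
      have h0 : (y - x k) + (x k - c0) = y - c0 := by abel
      rw [← h0, norm_add_sq_real]
    have e3 : ⟪w k, y - x k⟫
        = -(2 * ((k:ℝ)+1)) * ⟪y - x k, x k - p (x k)⟫ - (2 * σ k) * ⟪y - x k, x k - c0⟫ := by
      simp only [hwdef, inner_add_left, real_inner_smul_left]
      rw [show p (x k) - x k = -(x k - p (x k)) by abel, show c0 - x k = -(x k - c0) by abel,
        inner_neg_left, inner_neg_left, real_inner_comm (x k - p (x k)),
        real_inner_comm (x k - c0)]
      ring
    have e5 : ((k:ℝ)+1) * infDist y S ^ 2 ≤ ((k:ℝ)+1) * ‖y - p (x k)‖ ^ 2 := by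
      have h4 : infDist y S ≤ ‖y - p (x k)‖ := by
        rw [← dist_eq_norm]; exact Metric.infDist_le_dist_of_mem (hpS (x k))
      have h5 : infDist y S ^ 2 ≤ ‖y - p (x k)‖ ^ 2 := by nlinarith [hd_nonneg y]
      exact mul_le_mul_of_nonneg_left h5 (by positivity)
    have e6 : ‖x k - p (x k)‖ ^ 2 = infDist (x k) S ^ 2 := by rw [hpdist]
    have hFexp1 : F k y = h y + ((k:ℝ)+1) * infDist y S ^ 2 + σ k * ‖y - c0‖ ^ 2 := rfl
    have hFexp2 : F k (x k) = h (x k) + ((k:ℝ)+1) * infDist (x k) S ^ 2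
        + σ k * ‖x k - c0‖ ^ 2 := rfl
    have hyxM : ‖y - x k‖ * M < ε := by
      have := mem_ball.1 hy2
      rw [dist_eq_norm] at this
      rwa [← lt_div_iff₀ hM]
    have h6 : M * ‖y - x k‖ ^ 2 ≤ ε * ‖y - x k‖ := by
      nlinarith [norm_nonneg (y - x k)]
    have hσk := (hσpos k).le
    nlinarith [mul_le_mul_of_nonneg_left e2.le hσk, norm_nonneg (y - x k)]
  -- bound on the subgradients
  have hσ0le : ∀ k : ℕ, σ k ≤ σ 0 := by
    intro k
    rw [hσdef]
    apply div_le_div_of_nonneg_left (by positivity) (by positivity)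
    have : (0:ℝ) ≤ (k:ℝ) := Nat.cast_nonneg k
    push_cast
    nlinarith [sq_nonneg r]
  have hwbound : ∀ k : ℕ, ‖w k‖ ≤ 2 * L + 2 * σ 0 * r := by
    intro k
    have h1 : ‖w k‖ ≤ 2 * ((k:ℝ)+1) * ‖p (x k) - x k‖ + 2 * σ k * ‖c0 - x k‖ := by
      calc ‖w k‖ ≤ ‖(2 * ((k:ℝ)+1)) • (p (x k) - x k)‖ + ‖(2 * σ k) • (c0 - x k)‖ :=
            norm_add_le _ _
        _ = 2 * ((k:ℝ)+1) * ‖p (x k) - x k‖ + 2 * σ k * ‖c0 - x k‖ := by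
            rw [norm_smul, norm_smul, Real.norm_eq_abs, Real.norm_eq_abs,
              abs_of_pos (by positivity), abs_of_pos (by positivity : (0:ℝ) < 2 * σ k)]
    have h2 : ((k:ℝ)+1) * ‖p (x k) - x k‖ ≤ L := by
      rw [norm_sub_rev, hpdist]; exact hdL k
    have h3 : ‖c0 - x k‖ ≤ r := by
      rw [norm_sub_rev, ← dist_eq_norm]; exact mem_closedBall.1 (hxball k)
    have h4 := hσ0le k
    have h5 := (hσpos k).le
    have h6 := norm_nonneg (c0 - x k)
    nlinarith
  -- Bolzano-Weierstrass
  have hq : ∀ k : ℕ, (x k, w k) ∈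
      (closedBall c0 r) ×ˢ (closedBall (0 : EuclideanSpace ℝ (Fin n)) (2 * L + 2 * σ 0 * r)) := by
    intro k
    refine ⟨hxball k, ?_⟩
    rw [mem_closedBall, dist_zero_right]; exact hwbound k
  obtain ⟨⟨c, wl⟩, -, φ, hφ, hlim⟩ := tendsto_subseq_of_bounded
    ((Metric.isBounded_closedBall).prod (Metric.isBounded_closedBall)) hq
  have hxlim : Filter.Tendsto (fun j => x (φ j)) atTop (nhds c) :=
    (Continuous.tendsto continuous_fst _).comp hlim
  have hwlim : Filter.Tendsto (fun j => w (φ j)) atTop (nhds wl) :=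
    (Continuous.tendsto continuous_snd _).comp hlim
  -- the limit point is in the segment
  have hinv : Filter.Tendsto (fun m : ℕ => L / ((m:ℝ)+1)) atTop (nhds 0) := by
    simpa [div_eq_mul_inv] using tendsto_one_div_add_atTop_nhds_zero_nat.const_mul L
  have hdlim : Filter.Tendsto (fun j => infDist (x (φ j)) S) atTop (nhds 0) := by
    apply squeeze_zero (fun j => hd_nonneg _) (fun j => ?_) (hinv.comp hφ.tendsto_atTop)
    have hk1 : (0:ℝ) < (φ j : ℝ) + 1 := by positivity
    simp only [Function.comp_apply]
    rw [le_div_iff₀ hk1]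
    have := hdL (φ j)
    linarith
  have hcS : c ∈ S := by
    have h1 : Filter.Tendsto (fun j => infDist (x (φ j)) S) atTop (nhds (infDist c S)) :=
      ((Metric.continuous_infDist_pt S).tendsto c).comp hxlim
    exact (hSclosed.mem_iff_infDist_zero hSne).2 (tendsto_nhds_unique h1 hdlim)
  have hcU : c ∈ U := hseg hcS
  have hcball : dist c c0 ≤ r := by
    have h1 : c ∈ closedBall c0 r :=
      Metric.isClosed_closedBall.mem_of_tendsto hxlim (Filter.Eventually.of_forall fun j => hxball (φ j))
    exact mem_closedBall.1 h1
  -- limiting subdifferential membership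
  have hwM : wl ∈ MordukhovichSubdiff h c := by
    refine ⟨fun j => x (φ j), fun j => w (φ j), fun j => hwF (φ j), hxlim, ?_, hwlim⟩
    exact ((hhc.continuousAt (hU.mem_nhds hcU)).tendsto).comp hxlim
  -- the limiting subgradient pairs nonnegatively with b - a
  have hwba : a ≠ b → 0 ≤ ⟪wl, b - a⟫ := by
    intro hab
    have hterm : ∀ k : ℕ, -(2 * σ k * (r * ‖b - a‖)) ≤ ⟪w k, b - a⟫ := by
      intro k
      have hpk_ne : p (x k) ≠ b := by
        intro hpb
        have h1 : dist (p (x k)) c0 ≤ dist (p (x k)) (x k) + dist (x k) c0 :=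
          dist_triangle _ _ _
        have h2 : dist (p (x k)) (x k) ≤ r := by
          rw [dist_eq_norm, norm_sub_rev, hpdist]
          exact le_trans (Metric.infDist_le_dist_of_mem hc0S) (mem_closedBall.1 (hxball k))
        have h3 : dist (x k) c0 ≤ r := mem_closedBall.1 (hxball k)
        have h4 := hrb hab
        rw [hpb] at h1 h2
        linarith
      obtain ⟨s, hs01, hspk⟩ : ∃ s ∈ Icc (0:ℝ) 1, a + s • (b - a) = p (x k) := by
        have h0 := hpS (x k)
        rw [hSdef, segment_eq_image'] at h0
        exact h0
      have hs1 : s < 1 := by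
        rcases lt_or_eq_of_le hs01.2 with hlt | heq
        · exact hlt
        · exfalso
          apply hpk_ne
          rw [← hspk, heq, one_smul]
          abel
      have hvar := hpvar (x k) b (right_mem_segment ℝ a b)
      have hbp : b - p (x k) = (1 - s) • (b - a) := by
        rw [← hspk, sub_smul, one_smul]
        abel
      rw [hbp, real_inner_smul_right] at hvar
      have hip : ⟪x k - p (x k), b - a⟫ ≤ 0 := by nlinarith
      have h1 : 0 ≤ ⟪p (x k) - x k, b - a⟫ := by
        rw [show p (x k) - x k = -(x k - p (x k)) by abel, inner_neg_left]
        linarith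
      have h2 : |⟪c0 - x k, b - a⟫| ≤ r * ‖b - a‖ := by
        refine le_trans (abs_real_inner_le_norm _ _) ?_
        have h5 : ‖c0 - x k‖ ≤ r := by
          rw [norm_sub_rev, ← dist_eq_norm]; exact mem_closedBall.1 (hxball k)
        exact mul_le_mul_of_nonneg_right h5 (norm_nonneg _)
      have h3 := abs_le.1 h2
      have e3 : ⟪w k, b - a⟫ = (2 * ((k:ℝ)+1)) * ⟪p (x k) - x k, b - a⟫
          + (2 * σ k) * ⟪c0 - x k, b - a⟫ := by
        simp only [hwdef, inner_add_left, real_inner_smul_left]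
      have hσk := (hσpos k).le
      nlinarith [mul_nonneg (by positivity : (0:ℝ) ≤ 2*((k:ℝ)+1)) h1]
    have hL1 : Filter.Tendsto (fun j => ⟪w (φ j), b - a⟫) atTop (nhds ⟪wl, b - a⟫) :=
      hwlim.inner tendsto_const_nhds
    have hσtend : Filter.Tendsto (fun m : ℕ => σ m) atTop (nhds 0) := by
      have heq : ∀ m : ℕ, σ m = (L ^ 2 / (2 * r ^ 2)) / ((m:ℝ) + 1) := by
        intro m
        simp only [hσdef]
        rw [div_div]
      have h0 : Filter.Tendsto (fun m : ℕ => (L ^ 2 / (2 * r ^ 2)) / ((m:ℝ) + 1)) atTop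
          (nhds 0) := by
        have h00 := tendsto_one_div_add_atTop_nhds_zero_nat.const_mul (L ^ 2 / (2 * r ^ 2))
        rw [mul_zero] at h00
        exact h00.congr (fun m => mul_one_div _ _)
      simpa [← heq] using h0
    have hσ0' : Filter.Tendsto (fun j => -(2 * σ (φ j) * (r * ‖b - a‖))) atTop (nhds 0) := by
      have h0 : Filter.Tendsto (fun j => σ (φ j)) atTop (nhds 0) :=
        hσtend.comp hφ.tendsto_atTop
      have h1 := ((h0.const_mul 2).mul_const (r * ‖b - a‖)).neg
      simpa [mul_comm, mul_assoc] using h1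
    exact le_of_tendsto_of_tendsto' hσ0' hL1 (fun j => hterm (φ j))
  -- assemble the result
  by_cases hab : a = b
  · refine ⟨0, Set.mem_Ico.mpr ⟨le_refl 0, one_pos⟩, wl + v, ?_, ?_⟩
    · have hca : c = a := by
        have h0 := hcS
        rw [hSdef, hab, segment_same] at h0
        rw [h0, hab]
      have h1 : a + (0:ℝ) • (b - a) = c := by rw [hca]; simp
      rw [h1]
      exact mord_shift f v c wl hwM
    · rw [← hab]
      simp
  · obtain ⟨t, ht01, hct⟩ : ∃ t ∈ Icc (0:ℝ) 1, a + t • (b - a) = c := by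
      have h0 := hcS
      rw [hSdef, segment_eq_image'] at h0
      exact h0
    have ht1 : t < 1 := by
      rcases lt_or_eq_of_le ht01.2 with hlt | heq
      · exact hlt
      · exfalso
        have hcb : c = b := by
          rw [← hct, heq, one_smul]
          abel
        have h4 := hrb hab
        rw [hcb] at hcball
        linarith
    refine ⟨t, Set.mem_Ico.mpr ⟨ht01.1, ht1⟩, wl + v, ?_, ?_⟩
    · rw [hct]
      exact mord_shift f v c wl hwM
    · rw [inner_add_left, hvba]
      have := hwba hab
      linarith
end

section
/- Let φ : ℝⁿ → ℝ be C^{1,1} (differentiable with locally Lipschitz gradient) and quasiconvex. Then for all x, u ∈ ℝⁿ with ⟨∇φ(x), u⟩ = 0, there exists z in the Mordukhovich (limiting) subdifferential at x of the function y ↦ ⟨u, ∇φ(y)⟩ with ⟨z, u⟩ ≥ 0. -/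
local notation "⟪" x ", " y "⟫" => (inner ℝ x y : ℝ)

open MeasureTheory Filter Set Topology

lemma lip_ftc (f : ℝ → ℝ) (C : ℝ) (hC : 0 ≤ C) (hf : ∀ s t : ℝ, |f s - f t| ≤ C * |s - t|)
    (F : ℝ → ℝ)
    (hderiv : ∀ᵐ s : ℝ, HasDerivAt f (F s) s) (τ : ℝ) :
    ∫ s in (0:ℝ)..τ, F s = f τ - f 0 := by
  have hfc : Continuous f := by
    rw [Metric.continuous_iff]
    intro b ε hε
    refine ⟨ε / (C + 1), by positivity, fun a ha => ?_⟩
    have := hf a b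
    rw [Real.dist_eq]
    calc |f a - f b| ≤ C * |a - b| := hf a b
    _ ≤ C * (ε / (C+1)) := by
        apply mul_le_mul_of_nonneg_left _ hC
        rw [Real.dist_eq] at ha; linarith
    _ < ε := by rw [mul_comm, div_mul_eq_mul_div, div_lt_iff₀ (by linarith)]; nlinarith
  set h : ℕ → ℝ := fun m => 1/(m+1) with hh
  have hhpos : ∀ m, 0 < h m := fun m => by positivity
  have hh0 : Filter.Tendsto h atTop (nhds 0) := tendsto_one_div_add_atTop_nhds_zero_nat
  set DQ : ℕ → ℝ → ℝ := fun m s => (f (s + h m) - f s) / h m with hDQ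
  have hDQcont : ∀ m, Continuous (DQ m) :=
    fun m => ((hfc.comp (continuous_id.add continuous_const)).sub hfc).div_const _
  have hDQbd : ∀ m s, |DQ m s| ≤ C := by
    intro m s
    rw [abs_div, abs_of_pos (hhpos m), div_le_iff₀ (hhpos m)]
    calc |f (s + h m) - f s| ≤ C * |s + h m - s| := hf _ _
    _ = C * h m := by rw [show s + h m - s = h m by ring, abs_of_pos (hhpos m)]
  have hlim : ∀ᵐ s : ℝ, Filter.Tendsto (fun m => DQ m s) atTop (nhds (F s)) := by
    filter_upwards [hderiv] with s hs
    have h1 : Filter.Tendsto (fun m => s + h m) atTop (nhdsWithin s {s}ᶜ) := by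
      rw [tendsto_nhdsWithin_iff]
      constructor
      · simpa using tendsto_const_nhds.add hh0
      · exact Filter.Eventually.of_forall (fun m => by simp [(hhpos m).ne'])
    have h2 := (hasDerivAt_iff_tendsto_slope.mp hs).comp h1
    convert h2 using 2 with m
    simp [slope_def_field, DQ]
    try ring
  -- dominated convergence
  have hint : Filter.Tendsto (fun m => ∫ s in (0:ℝ)..τ, DQ m s) atTop
      (nhds (∫ s in (0:ℝ)..τ, F s)) := by
    apply intervalIntegral.tendsto_integral_filter_of_dominated_convergence
      (bound := fun _ => C)
    · exact Filter.Eventually.of_forall (fun m => (hDQcont m).aestronglyMeasurable)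
    · exact Filter.Eventually.of_forall (fun m => Filter.Eventually.of_forall
        (fun s _ => by rw [Real.norm_eq_abs]; exact hDQbd m s))
    · exact intervalIntegrable_const
    · filter_upwards [hlim] with s hs _ using hs
  -- compute the integrals of difference quotients
  have hfint : ∀ a b : ℝ, IntervalIntegrable f volume a b :=
    fun a b => hfc.intervalIntegrable a b
  have hcomp : ∀ m, ∫ s in (0:ℝ)..τ, DQ m s
      = ((∫ s in τ..(τ + h m), f s) - ∫ s in (0:ℝ)..(h m), f s) / h m := by
    intro m
    have e1 : ∫ s in (0:ℝ)..τ, DQ m s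
        = ((∫ s in (0:ℝ)..τ, f (s + h m)) - ∫ s in (0:ℝ)..τ, f s) / h m := by
      have hc2 : Continuous (fun s : ℝ => f (s + h m)) := hfc.comp (continuous_add_right _)
      rw [intervalIntegral.integral_div, intervalIntegral.integral_sub
        (hc2.intervalIntegrable _ _) (hfint _ _)]
    have e2 : (∫ s in (0:ℝ)..τ, f (s + h m)) = ∫ s in (h m)..(τ + h m), f s := by
      rw [intervalIntegral.integral_comp_add_right f (h m), zero_add]
    have e3 : (∫ s in (h m)..(τ + h m), f s) - ∫ s in (0:ℝ)..τ, f s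
        = (∫ s in τ..(τ + h m), f s) - ∫ s in (0:ℝ)..(h m), f s := by
      have a1 : (∫ s in (h m)..τ, f s) + (∫ s in τ..(τ + h m), f s)
          = ∫ s in (h m)..(τ + h m), f s :=
        intervalIntegral.integral_add_adjacent_intervals (hfint _ _) (hfint _ _)
      have a2 : (∫ s in (0:ℝ)..(h m), f s) + (∫ s in (h m)..τ, f s)
          = ∫ s in (0:ℝ)..τ, f s :=
        intervalIntegral.integral_add_adjacent_intervals (hfint _ _) (hfint _ _)
      linarith
    rw [e1, e2, e3]
  -- error estimate
  have herr : ∀ m, |(∫ s in (0:ℝ)..τ, DQ m s) - (f τ - f 0)| ≤ 2 * C * h m := by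
    intro m
    have key : ∀ b : ℝ, |(∫ s in b..(b + h m), f s) - h m * f b| ≤ C * h m * h m := by
      intro b
      have : (∫ s in b..(b + h m), f s) - h m * f b
          = ∫ s in b..(b + h m), (f s - f b) := by
        rw [intervalIntegral.integral_sub (hfint _ _) intervalIntegrable_const,
          intervalIntegral.integral_const]
        simp [smul_eq_mul]
        try ring
      rw [this, ← Real.norm_eq_abs]
      have := intervalIntegral.norm_integral_le_of_norm_le_const
        (C := C * h m) (f := fun s => f s - f b) (a := b) (b := b + h m) ?_
      · calc ‖∫ s in b..(b + h m), (f s - f b)‖ ≤ C * h m * |b + h m - b| := this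
        _ = C * h m * h m := by rw [show b + h m - b = h m by ring, abs_of_pos (hhpos m)]
      · intro x hx
        rw [Set.uIoc_of_le (by linarith [hhpos m])] at hx
        rw [Real.norm_eq_abs]
        calc |f x - f b| ≤ C * |x - b| := hf _ _
        _ ≤ C * h m := by
            apply mul_le_mul_of_nonneg_left _ hC
            rw [abs_of_pos (by linarith [hx.1] : 0 < x - b)]
            linarith [hx.2]
    have e := hcomp m
    rw [e]
    have k1 := key τ
    have k2 := key 0
    rw [zero_add] at k2
    have hm := hhpos m
    have expand : ((∫ s in τ..(τ + h m), f s) - ∫ s in (0:ℝ)..(h m), f s) / h m - (f τ - f 0)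
        = (((∫ s in τ..(τ + h m), f s) - h m * f τ) - ((∫ s in (0:ℝ)..(h m), f s) - h m * f 0)) / h m := by
      field_simp
      ring
    rw [expand, abs_div, abs_of_pos hm, div_le_iff₀ hm]
    calc |((∫ s in τ..(τ + h m), f s) - h m * f τ) - ((∫ s in (0:ℝ)..(h m), f s) - h m * f 0)|
        ≤ |(∫ s in τ..(τ + h m), f s) - h m * f τ| + |(∫ s in (0:ℝ)..(h m), f s) - h m * f 0| :=
          abs_sub _ _
    _ ≤ C * h m * h m + C * h m * h m := by linarith
    _ = 2 * C * h m * h m := by ring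
  -- conclude
  have hint2 : Filter.Tendsto (fun m => ∫ s in (0:ℝ)..τ, DQ m s) atTop (nhds (f τ - f 0)) := by
    rw [← tendsto_sub_nhds_zero_iff]
    have hb : Filter.Tendsto (fun m => 2 * C * h m) atTop (nhds 0) := by
      simpa using (tendsto_const_nhds.mul hh0 :
        Filter.Tendsto (fun m => 2 * C * h m) atTop (nhds (2 * C * 0)))
    exact squeeze_zero_norm (fun m => by rw [Real.norm_eq_abs]; exact herr m) hb
  exact tendsto_nhds_unique hint hint2

lemma exists_good_base {n : ℕ} (G : EuclideanSpace ℝ (Fin n) → ℝ) (L : NNReal)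
    (hG : LipschitzWith L G) (a u : EuclideanSpace ℝ (Fin n)) {η : ℝ} (hη : 0 < η) :
    ∃ w : EuclideanSpace ℝ (Fin n), ‖w - a‖ < η ∧
      ∀ᵐ s : ℝ, DifferentiableAt ℝ G (w + s • u) := by
  set N : Set (EuclideanSpace ℝ (Fin n)) := {y | ¬ DifferentiableAt ℝ G y} with hNdef
  have hN : volume N = 0 := by
    have := hG.ae_differentiableAt (μ := volume)
    rwa [MeasureTheory.ae_iff] at this
  obtain ⟨N', hNN', hN'meas, hN'0⟩ := exists_measurable_superset_of_null hN
  set T : EuclideanSpace ℝ (Fin n) × ℝ → EuclideanSpace ℝ (Fin n) :=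
    fun p => p.1 + p.2 • u with hT
  have hTmeas : Measurable T := measurable_fst.add (measurable_snd.smul_const u)
  have hpre : (volume.prod volume) (T ⁻¹' N') = 0 := by
    rw [Measure.prod_apply_symm (hTmeas hN'meas)]
    have : ∀ s : ℝ, volume ((fun w : EuclideanSpace ℝ (Fin n) => (w, s)) ⁻¹' (T ⁻¹' N')) = 0 := by
      intro s
      have : ((fun w : EuclideanSpace ℝ (Fin n) => (w, s)) ⁻¹' (T ⁻¹' N'))
          = (· + s • u) ⁻¹' N' := rfl
      rw [this, measure_preimage_add_right volume _ N', hN'0]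
    simp [this]
  have hae : ∀ᵐ p : EuclideanSpace ℝ (Fin n) × ℝ ∂(volume.prod volume), T p ∉ N' := by
    rw [MeasureTheory.ae_iff]
    simp only [not_not]
    exact hpre
  have hae2 := MeasureTheory.Measure.ae_ae_of_ae_prod hae
  -- pick w in ball a η with the property
  have hball : volume (Metric.ball a η) ≠ 0 := (Metric.measure_ball_pos volume a hη).ne'
  have : (Metric.ball a η ∩ {w | ∀ᵐ s : ℝ, T (w, s) ∉ N'}).Nonempty := by
    apply MeasureTheory.nonempty_of_measure_ne_zero (μ := volume)
    rw [measure_inter_conull ?_]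
    · exact hball
    · rwa [MeasureTheory.ae_iff] at hae2
  obtain ⟨w, hw1, hw2⟩ := this
  refine ⟨w, by simpa [dist_eq_norm] using Metric.mem_ball.mp hw1, ?_⟩
  filter_upwards [hw2] with s hs
  by_contra hd
  exact hs (hNN' hd)

lemma key {n : ℕ} (G : EuclideanSpace ℝ (Fin n) → ℝ) (L : NNReal)
    (hG : LipschitzWith L G) (a u : EuclideanSpace ℝ (Fin n)) (τ ε η : ℝ)
    (hτ : 0 < τ) (hε : 0 < ε) (hη : 0 < η) (hab : G a ≤ G (a + τ • u)) :
    ∃ y, ‖y - a‖ ≤ η + τ * ‖u‖ ∧ DifferentiableAt ℝ G y ∧ -ε ≤ fderiv ℝ G y u := by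
  by_contra hcon
  push_neg at hcon
  set η0 : ℝ := min η (ε * τ / (2 * L + 2)) with hη0def
  have hη0 : 0 < η0 := lt_min hη (by positivity)
  obtain ⟨w, hw1, hw2⟩ := exists_good_base G L hG a u hη0
  set f : ℝ → ℝ := fun s => G (w + s • u) with hfdef
  set F : ℝ → ℝ := fun s => (fderiv ℝ G (w + s • u)) u with hFdef
  have hlin : ∀ s t : ℝ, ‖(w + s • u) - (w + t • u)‖ = |s - t| * ‖u‖ := by
    intro s t
    rw [show (w + s • u) - (w + t • u) = (s - t) • u by module, norm_smul, Real.norm_eq_abs]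
  have hflip : ∀ s t : ℝ, |f s - f t| ≤ (L * ‖u‖) * |s - t| := by
    intro s t
    have := hG.dist_le_mul (w + s • u) (w + t • u)
    rw [dist_eq_norm, dist_eq_norm, hlin s t] at this
    rw [← Real.norm_eq_abs]
    calc ‖f s - f t‖ ≤ L * (|s - t| * ‖u‖) := this
    _ = (L * ‖u‖) * |s - t| := by ring
  have hFbd : ∀ s, |F s| ≤ (L * ‖u‖) := by
    intro s
    rw [← Real.norm_eq_abs]
    calc ‖(fderiv ℝ G (w + s • u)) u‖ ≤ ‖fderiv ℝ G (w + s • u)‖ * ‖u‖ :=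
      (fderiv ℝ G (w + s • u)).le_opNorm u
    _ ≤ L * ‖u‖ := by
        apply mul_le_mul_of_nonneg_right _ (norm_nonneg u)
        exact norm_fderiv_le_of_lipschitz ℝ hG
  have hFmeas : Measurable F :=
    (measurable_fderiv_apply_const ℝ G u).comp
      ((continuous_const.add (continuous_id.smul continuous_const)).measurable)
  have hderiv : ∀ᵐ s : ℝ, HasDerivAt f (F s) s := by
    filter_upwards [hw2] with s hs
    have hline : HasDerivAt (fun t : ℝ => w + t • u) u s := by
      have h1 : HasDerivAt (fun t : ℝ => t • u) ((1:ℝ) • u) s :=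
        (hasDerivAt_id s).smul_const u
      rw [one_smul] at h1
      exact h1.const_add w
    exact (hs.hasFDerivAt.comp_hasDerivAt s hline)
  have hftc := lip_ftc f (L * ‖u‖) (by positivity) hflip F hderiv τ
  -- a.e. bound on F over the interval
  have hFle : ∀ᵐ s : ℝ, s ∈ Set.uIoc (0:ℝ) τ → F s ≤ -ε := by
    filter_upwards [hw2] with s hs hmem
    rw [Set.uIoc_of_le hτ.le] at hmem
    apply le_of_lt
    apply hcon
    · rw [show w + s • u - a = (w - a) + s • u by module]
      calc ‖(w - a) + s • u‖ ≤ ‖w - a‖ + ‖s • u‖ := norm_add_le _ _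
      _ ≤ η + τ * ‖u‖ := by
          apply add_le_add (le_of_lt (lt_of_lt_of_le hw1 (min_le_left _ _)))
          rw [norm_smul, Real.norm_eq_abs, abs_of_pos hmem.1]
          exact mul_le_mul_of_nonneg_right hmem.2 (norm_nonneg u)
    · exact hs
  have hFint : IntervalIntegrable F volume 0 τ := by
    rw [intervalIntegrable_iff]
    apply Measure.integrableOn_of_bounded (M := (L * ‖u‖)) measure_Ioc_lt_top.ne
      hFmeas.aestronglyMeasurable
    exact Filter.Eventually.of_forall (fun s => by rw [Real.norm_eq_abs]; exact hFbd s)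
  have hres : ∀ᵐ s ∂(volume.restrict (Set.Ioc (0:ℝ) τ)), F s ≤ -ε := by
    rw [ae_restrict_iff' measurableSet_Ioc]
    filter_upwards [hFle] with s hs hmem
    exact hs (by rwa [Set.uIoc_of_le hτ.le])
  have hintle : ∫ s in (0:ℝ)..τ, F s ≤ ∫ s in (0:ℝ)..τ, (-ε : ℝ) := by
    rw [intervalIntegral.integral_of_le hτ.le, intervalIntegral.integral_of_le hτ.le]
    apply setIntegral_mono_ae_restrict ?_ ?_ hres
    · have := hFint
      rwa [intervalIntegrable_iff, Set.uIoc_of_le hτ.le] at this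
    · exact integrableOn_const measure_Ioc_lt_top.ne
  have hconst : ∫ s in (0:ℝ)..τ, (-ε : ℝ) = -(ε * τ) := by
    rw [intervalIntegral.integral_const, smul_eq_mul]
    ring
  have h1 : |f τ - G (a + τ • u)| ≤ L * η0 := by
    have hd := hG.dist_le_mul (w + τ • u) (a + τ • u)
    rw [dist_eq_norm, dist_eq_norm, show (w + τ • u) - (a + τ • u) = w - a by module] at hd
    rw [← Real.norm_eq_abs]
    calc ‖f τ - G (a + τ • u)‖ ≤ L * ‖w - a‖ := hd
    _ ≤ L * η0 := mul_le_mul_of_nonneg_left hw1.le L.coe_nonneg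
  have h2 : |f 0 - G a| ≤ L * η0 := by
    have hd := hG.dist_le_mul (w + (0:ℝ) • u) a
    rw [dist_eq_norm, dist_eq_norm, show (w + (0:ℝ) • u) - a = w - a by module] at hd
    rw [← Real.norm_eq_abs]
    calc ‖f 0 - G a‖ ≤ L * ‖w - a‖ := hd
    _ ≤ L * η0 := mul_le_mul_of_nonneg_left hw1.le L.coe_nonneg
  have hkey : 2 * (L:ℝ) * η0 < ε * τ := by
    have h2L2 : (0:ℝ) < 2 * L + 2 := by positivity
    calc 2 * (L:ℝ) * η0 ≤ 2 * L * (ε * τ / (2 * L + 2)) := by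
          apply mul_le_mul_of_nonneg_left (min_le_right _ _) (by positivity)
    _ < ε * τ := by
        rw [mul_div_assoc', div_lt_iff₀ h2L2]
        nlinarith [mul_pos hε hτ, L.coe_nonneg]
  have ha1 := abs_le.mp h1
  have ha2 := abs_le.mp h2
  linarith [hftc, hintle, hconst]

lemma grad_mem_frechet {n : ℕ} (g G : EuclideanSpace ℝ (Fin n) → ℝ)
    (x0 : EuclideanSpace ℝ (Fin n)) (r : ℝ)
    (hEq : Set.EqOn g G (Metric.ball x0 r)) (y : EuclideanSpace ℝ (Fin n))
    (hy : y ∈ Metric.ball x0 r) (hG : DifferentiableAt ℝ G y) :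
    gradient G y ∈ FrechetSubdiff g y := by
  intro ε hε
  have h1 := hG.hasFDerivAt.isLittleO
  have h2 := h1.def hε
  have h3 := Metric.isOpen_ball.eventually_mem hy
  filter_upwards [h2, h3] with y' hle hball
  have hinner : ⟪gradient G y, y' - y⟫ = fderiv ℝ G y (y' - y) :=
    InnerProductSpace.toDual_symm_apply
  rw [hEq hball, hEq hy, hinner]
  rw [Real.norm_eq_abs] at hle
  linarith [(abs_le.mp hle).1]

theorem stmt_10 (n : ℕ) (φ : EuclideanSpace ℝ (Fin n) → ℝ)
    (hφ : Differentiable ℝ φ) (hlip : LocallyLipschitz (gradient φ))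
    (hqc : ∀ x y : EuclideanSpace ℝ (Fin n), ∀ lam ∈ Set.Icc (0:ℝ) 1,
      φ ((1 - lam) • x + lam • y) ≤ max (φ x) (φ y)) :
    ∀ x u : EuclideanSpace ℝ (Fin n), ⟪gradient φ x, u⟫ = 0 →
      ∃ z ∈ MordukhovichSubdiff (fun y => ⟪u, gradient φ y⟫) x, 0 ≤ ⟪z, u⟫ := by
  intro x u hxu
  set g : EuclideanSpace ℝ (Fin n) → ℝ := fun y => ⟪u, gradient φ y⟫ with hgdef
  have hginner : ∀ y, g y = fderiv ℝ φ y u := by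
    intro y
    rw [hgdef]
    simp only
    rw [real_inner_comm]
    exact InnerProductSpace.toDual_symm_apply
  have hgx0 : g x = 0 := by rw [hgdef]; simp only; rw [real_inner_comm]; exact hxu
  -- local Lipschitz data
  obtain ⟨K, t, ht, hK⟩ := hlip x
  obtain ⟨r, hr0, hrt⟩ := Metric.mem_nhds_iff.mp ht
  have hgball : LipschitzOnWith (K * ‖u‖₊) g (Metric.ball x r) := by
    apply LipschitzOnWith.of_dist_le_mul
    intro p hp q hq
    have h1 : dist (g p) (g q) = |⟪u, gradient φ p - gradient φ q⟫| := by
      rw [Real.dist_eq, hgdef]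
      simp only
      rw [← inner_sub_right]
    rw [h1]
    calc |⟪u, gradient φ p - gradient φ q⟫| ≤ ‖u‖ * ‖gradient φ p - gradient φ q‖ :=
        abs_real_inner_le_norm u _
    _ = ‖u‖ * dist (gradient φ p) (gradient φ q) := by rw [dist_eq_norm]
    _ ≤ ‖u‖ * (K * dist p q) := by
        apply mul_le_mul_of_nonneg_left _ (norm_nonneg u)
        exact (hK.mono hrt).dist_le_mul p hp q hq
    _ = ↑(K * ‖u‖₊) * dist p q := by push_cast; ring
  obtain ⟨G, hGlip, hGeq⟩ := hgball.extend_real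
  set K' : NNReal := K * ‖u‖₊ with hK'def
  -- the per-m construction
  set sm : ℕ → ℝ := fun m => min (1/(m+1)) (r/(4*(‖u‖+1))) with hsmdef
  set em : ℕ → ℝ := fun m => min (1/(m+1)) (r/4) with hemdef
  have hsm0 : ∀ m, 0 < sm m := fun m => lt_min (by positivity) (by positivity)
  have hem0 : ∀ m, 0 < em m := fun m => lt_min (by positivity) (by positivity)
  have hbnd : ∀ m, em m + 2 * sm m * ‖u‖ ≤ 3 * r / 4 := by
    intro m
    have h1 : em m ≤ r/4 := min_le_right _ _
    have h2 : sm m ≤ r/(4*(‖u‖+1)) := min_le_right _ _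
    have h3 : sm m * ‖u‖ ≤ r/4 := by
      have h4 : 0 ≤ ‖u‖ := norm_nonneg u
      have h5 : sm m * ‖u‖ ≤ (r/(4*(‖u‖+1))) * ‖u‖ := mul_le_mul_of_nonneg_right h2 h4
      calc sm m * ‖u‖ ≤ (r/(4*(‖u‖+1))) * ‖u‖ := h5
      _ ≤ r/4 := by
          rw [div_mul_eq_mul_div, div_le_div_iff₀ (by positivity) (by norm_num)]
          nlinarith
    nlinarith [hsm0 m, norm_nonneg u]
  have claim : ∀ m : ℕ, ∃ y, ‖y - x‖ ≤ em m + 2 * sm m * ‖u‖ ∧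
      DifferentiableAt ℝ G y ∧ -(1/(m+1) : ℝ) ≤ fderiv ℝ G y u := by
    intro m
    have hmem : ∀ c : ℝ, |c| ≤ sm m → x + c • u ∈ Metric.ball x r := by
      intro c hc
      rw [Metric.mem_ball, dist_eq_norm, show x + c • u - x = c • u by module, norm_smul,
        Real.norm_eq_abs]
      have h2 : sm m ≤ r/(4*(‖u‖+1)) := min_le_right _ _
      calc |c| * ‖u‖ ≤ (r/(4*(‖u‖+1))) * ‖u‖ :=
        mul_le_mul (hc.trans h2) le_rfl (norm_nonneg u) (by positivity)
      _ < r := by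
          rw [div_mul_eq_mul_div, div_lt_iff₀ (by positivity)]
          nlinarith [norm_nonneg u, hr0]
    have hqx : φ x ≤ max (φ (x - sm m • u)) (φ (x + sm m • u)) := by
      have := hqc (x - sm m • u) (x + sm m • u) (1/2) ⟨by norm_num, by norm_num⟩
      rwa [show (1 - 1/2 : ℝ) • (x - sm m • u) + (1/2 : ℝ) • (x + sm m • u) = x by module] at this
    set ψ : ℝ → ℝ := fun s => φ (x + s • u) with hψdef
    have hψd : ∀ s : ℝ, HasDerivAt ψ (g (x + s • u)) s := by
      intro s
      have hline : HasDerivAt (fun s : ℝ => x + s • u) u s := by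
        have h1 : HasDerivAt (fun s : ℝ => s • u) ((1:ℝ) • u) s := (hasDerivAt_id s).smul_const u
        rw [one_smul] at h1
        exact h1.const_add x
      have := (hφ (x + s • u)).hasFDerivAt.comp_hasDerivAt s hline
      rwa [← hginner (x + s • u)] at this
    have hψc : Continuous ψ :=
      hφ.continuous.comp (continuous_const.add (continuous_id.smul continuous_const))
    have hψ0 : ψ 0 = φ x := by rw [hψdef]; simp
    rcases le_max_iff.mp hqx with hcase | hcase
    · -- φ x ≤ φ (x - sm • u) : left case
      have hms : -(sm m) < 0 := by linarith [hsm0 m]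
      obtain ⟨c, hc, hceq⟩ := exists_hasDerivAt_eq_slope ψ (fun s => g (x + s • u)) hms
        hψc.continuousOn (fun s _ => hψd s)
      have hψms : ψ (-(sm m)) = φ (x - sm m • u) := by
        rw [hψdef]; simp only
        rw [show x + (-(sm m)) • u = x - sm m • u by module]
      have hgle : g (x + c • u) ≤ 0 := by
        rw [hceq, hψ0, hψms]
        apply div_nonpos_of_nonpos_of_nonneg <;> linarith [hsm0 m]
      have hamem : x + c • u ∈ Metric.ball x r := by
        apply hmem
        rw [abs_le]
        constructor <;> linarith [hc.1, hc.2]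
      have hxmem : x ∈ Metric.ball x r := by simp [hr0]
      have hab : G (x + c • u) ≤ G ((x + c • u) + (-c) • u) := by
        rw [show (x + c • u) + (-c) • u = x by module, ← hGeq hxmem, ← hGeq hamem, hgx0]
        exact hgle
      obtain ⟨y, hy1, hy2, hy3⟩ := key G K' hGlip (x + c • u) u (-c) (1/(m+1)) (em m)
        (by linarith [hc.2]) (by positivity) (hem0 m) hab
      refine ⟨y, ?_, hy2, hy3⟩
      calc ‖y - x‖ = ‖(y - (x + c • u)) + c • u‖ := by rw [show y - x = (y - (x + c • u)) + c • u by module]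
      _ ≤ ‖y - (x + c • u)‖ + ‖c • u‖ := norm_add_le _ _
      _ ≤ (em m + (-c) * ‖u‖) + |c| * ‖u‖ := by
          apply add_le_add hy1
          rw [norm_smul, Real.norm_eq_abs]
      _ ≤ em m + 2 * sm m * ‖u‖ := by
          rw [abs_of_neg hc.2]
          have : -c ≤ sm m := by linarith [hc.1]
          nlinarith [norm_nonneg u]
    · -- φ x ≤ φ (x + sm • u) : right case
      obtain ⟨c, hc, hceq⟩ := exists_hasDerivAt_eq_slope ψ (fun s => g (x + s • u)) (hsm0 m)
        hψc.continuousOn (fun s _ => hψd s)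
      have hgge : 0 ≤ g (x + c • u) := by
        rw [hceq, hψ0]
        have hψs : ψ (sm m) = φ (x + sm m • u) := rfl
        apply div_nonneg
        · rw [hψs]; linarith
        · linarith [hsm0 m]
      have hbmem : x + c • u ∈ Metric.ball x r := by
        apply hmem
        rw [abs_le]
        constructor <;> linarith [hc.1, hc.2, hsm0 m]
      have hxmem : x ∈ Metric.ball x r := by simp [hr0]
      have hab : G x ≤ G (x + c • u) := by
        rw [← hGeq hxmem, ← hGeq hbmem, hgx0]
        exact hgge
      obtain ⟨y, hy1, hy2, hy3⟩ := key G K' hGlip x u c (1/(m+1)) (em m)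
        hc.1 (by positivity) (hem0 m) hab
      refine ⟨y, ?_, hy2, hy3⟩
      calc ‖y - x‖ ≤ em m + c * ‖u‖ := hy1
      _ ≤ em m + 2 * sm m * ‖u‖ := by nlinarith [norm_nonneg u, hc.1, hc.2, hsm0 m]
  choose Y hY1 hY2 hY3 using claim
  have hYball : ∀ m, Y m ∈ Metric.ball x r := by
    intro m
    rw [Metric.mem_ball, dist_eq_norm]
    calc ‖Y m - x‖ ≤ em m + 2 * sm m * ‖u‖ := hY1 m
    _ ≤ 3 * r / 4 := hbnd m
    _ < r := by linarith
  set zs : ℕ → EuclideanSpace ℝ (Fin n) := fun m => gradient G (Y m) with hzsdef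
  have hzsb : ∀ m, zs m ∈ Metric.closedBall 0 K' := by
    intro m
    rw [Metric.mem_closedBall, dist_zero_right]
    have : ‖zs m‖ = ‖fderiv ℝ G (Y m)‖ := by
      rw [hzsdef]
      exact LinearIsometryEquiv.norm_map _ _
    rw [this]
    exact norm_fderiv_le_of_lipschitz ℝ hGlip
  obtain ⟨z, _, k, hkmono, hzk⟩ :=
    tendsto_subseq_of_bounded Metric.isBounded_closedBall hzsb
  have hzfd : ∀ m, ⟪zs m, u⟫ = fderiv ℝ G (Y m) u := by
    intro m
    rw [hzsdef]
    exact InnerProductSpace.toDual_symm_apply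
  -- Y tends to x
  have hYx : Filter.Tendsto Y atTop (nhds x) := by
    rw [tendsto_iff_dist_tendsto_zero]
    apply squeeze_zero (fun m => dist_nonneg)
      (g := fun m : ℕ => (1/(m+1) : ℝ) * (1 + 2 * ‖u‖))
    · intro m
      rw [dist_eq_norm]
      calc ‖Y m - x‖ ≤ em m + 2 * sm m * ‖u‖ := hY1 m
      _ ≤ (1/(m+1)) + 2 * (1/(m+1)) * ‖u‖ := by
          have h1 : em m ≤ 1/(m+1) := min_le_left _ _
          have h2 : sm m ≤ 1/(m+1) := min_le_left _ _
          nlinarith [norm_nonneg u]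
      _ = (1/(m+1)) * (1 + 2 * ‖u‖) := by ring
    · have : Filter.Tendsto (fun m : ℕ => (1/(m+1) : ℝ)) atTop (nhds 0) :=
        tendsto_one_div_add_atTop_nhds_zero_nat
      simpa using this.mul_const (1 + 2 * ‖u‖)
  have hYkx : Filter.Tendsto (Y ∘ k) atTop (nhds x) := hYx.comp hkmono.tendsto_atTop
  have hgc : Continuous g := by
    rw [hgdef]
    exact continuous_const.inner hlip.continuous
  refine ⟨z, ⟨Y ∘ k, zs ∘ k, ?_, hYkx, ?_, hzk⟩, ?_⟩
  · intro j
    exact grad_mem_frechet g G x r hGeq (Y (k j)) (hYball (k j)) (hY2 (k j))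
  · exact (hgc.tendsto x).comp hYkx
  · have htz : Filter.Tendsto (fun j => ⟪zs (k j), u⟫) atTop (nhds ⟪z, u⟫) :=
      ((continuous_id.inner continuous_const).tendsto z).comp hzk
    have hneg : Filter.Tendsto (fun j : ℕ => -(1/(j+1) : ℝ)) atTop (nhds 0) := by
      have : Filter.Tendsto (fun j : ℕ => (1/(j+1) : ℝ)) atTop (nhds 0) :=
        tendsto_one_div_add_atTop_nhds_zero_nat
      simpa using this.neg
    apply le_of_tendsto_of_tendsto' hneg htz
    intro j
    rw [hzfd (k j)]
    have h1 : (1 / (k j + 1) : ℝ) ≤ 1/(j+1) := by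
      apply div_le_div_of_nonneg_left (by norm_num) (by positivity)
      have h2 : j ≤ k j := hkmono.le_apply
      have h3 : (j : ℝ) ≤ k j := Nat.cast_le.mpr h2
      linarith
    calc -(1/(j+1) : ℝ) ≤ -(1/(k j + 1)) := by linarith
    _ ≤ fderiv ℝ G (Y (k j)) u := hY3 (k j)
end

section
/- Let φ : ℝⁿ → ℝ be C^{1,1} such that for every x ∈ ℝⁿ and every nonzero u ∈ ℝⁿ with ⟨∇φ(x), u⟩ = 0, every z in the Mordukhovich subdifferential of y ↦ ⟨u, ∇φ(y)⟩ at x satisfies ⟨z, u⟩ > 0. Then φ is strictly pseudoconvex. -/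
local notation "⟪" x ", " y "⟫" => (inner ℝ x y : ℝ)

lemma psq_hasDerivAt (a : ℝ) : HasDerivAt (fun r : ℝ => (max r 0)^2) (2 * max a 0) a := by
  rcases lt_trichotomy a 0 with h | h | h
  · have heq : (fun r : ℝ => (max r 0)^2) =ᶠ[nhds a] (fun _ => (0:ℝ)) := by
      filter_upwards [eventually_lt_nhds h] with r hr
      simp [max_eq_right hr.le]
    rw [max_eq_right h.le, mul_zero]
    exact (hasDerivAt_const a (0:ℝ)).congr_of_eventuallyEq heq
  · subst h
    rw [max_self, mul_zero]
    rw [hasDerivAt_iff_isLittleO, Asymptotics.isLittleO_iff]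
    intro c hc
    have hev : ∀ᶠ r : ℝ in nhds 0, |r| ≤ c :=
      Metric.eventually_nhds_iff.mpr ⟨c, hc, fun {y} hy => by simpa [Real.dist_eq] using hy.le⟩
    filter_upwards [hev] with r hr
    have h1 : (max r 0)^2 ≤ |r|^2 := by
      rcases le_or_gt r 0 with h | h
      · simp [max_eq_right h]; positivity
      · rw [max_eq_left h.le, abs_of_pos h]
    have h2 : ‖(max r 0)^2 - (max (0:ℝ) 0)^2 - (r - 0) • (0:ℝ)‖ = (max r 0)^2 := by
      simp [abs_of_nonneg (by positivity : (0:ℝ) ≤ (max r 0)^2)]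
    rw [h2]
    calc (max r 0)^2 ≤ |r|^2 := h1
      _ = |r| * |r| := sq (|r|) ▸ by ring
      _ ≤ c * |r| := by nlinarith [abs_nonneg r]
      _ = c * ‖r - 0‖ := by rw [sub_zero, Real.norm_eq_abs]
  · have heq : (fun r : ℝ => (max r 0)^2) =ᶠ[nhds a] (fun r => r^2) := by
      filter_upwards [eventually_gt_nhds h] with r hr
      simp [max_eq_left hr.le]
    rw [max_eq_left h.le]
    have h2 : HasDerivAt (fun r : ℝ => r^2) (2*a) a := by
      simpa using (hasDerivAt_pow 2 a)
    exact h2.congr_of_eventuallyEq heq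

variable {E : Type*} [NormedAddCommGroup E] [InnerProductSpace ℝ E]


-- Lemma A
lemma fsub_of_localmin {f ψ : E → ℝ} {w d : E} {D : E →L[ℝ] ℝ}
    (hψ : HasFDerivAt ψ D w) (hd : ∀ v, D v = ⟪d, v⟫)
    (hmin : ∀ᶠ y in nhds w, f w + ψ w ≤ f y + ψ y) : -d ∈ FrechetSubdiff f w := by
  intro ε hε
  have h1 := hψ.isLittleO.bound hε
  filter_upwards [h1, hmin] with y h1 h2
  have hab := abs_le.mp (by simpa [abs_norm] using h1 : |ψ y - ψ w - D (y - w)| ≤ ε * ‖y - w‖)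
  have hD : D (y - w) = ⟪d, y - w⟫ := hd _
  have hneg : (⟪-d, y - w⟫ : ℝ) = - ⟪d, y - w⟫ := by rw [inner_neg_left]
  rw [hneg]
  rw [hD] at hab
  linarith [hab.2]

-- Lemma B
lemma fsub_norm_le {f : E → ℝ} {w z : E} {K : NNReal} {r : ℝ} (hr : 0 < r)
    (hf : LipschitzOnWith K f (Metric.ball w r))
    (hz : z ∈ FrechetSubdiff f w) : ‖z‖ ≤ K := by
  rcases eq_or_ne z 0 with h0 | h0
  · simp [h0]
  have hzn : 0 < ‖z‖ := norm_pos_iff.mpr h0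
  have key : ∀ ε > 0, ‖z‖ ≤ K + ε := by
    intro ε hε
    have h := hz ε hε
    rw [Metric.eventually_nhds_iff] at h
    obtain ⟨δ, hδ, hδ'⟩ := h
    set s := min (δ/2) (r/2) / ‖z‖ with hs
    have hspos : 0 < s := by positivity
    set y := w + s • z with hy
    have hyd : y - w = s • z := by simp [hy]
    have hynorm : ‖y - w‖ = s * ‖z‖ := by
      rw [hyd, norm_smul, Real.norm_eq_abs, abs_of_pos hspos]
    have hsz : s * ‖z‖ = min (δ/2) (r/2) := by
      rw [hs, div_mul_cancel₀ _ hzn.ne']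
    have hyδ : dist y w < δ := by
      rw [dist_eq_norm, hynorm, hsz]
      calc min (δ/2) (r/2) ≤ δ/2 := min_le_left _ _
        _ < δ := by linarith
    have hyball : y ∈ Metric.ball w r := by
      rw [Metric.mem_ball, dist_eq_norm, hynorm, hsz]
      calc min (δ/2) (r/2) ≤ r/2 := min_le_right _ _
        _ < r := by linarith
    have h1 := hδ' hyδ
    have h2 : f y - f w ≤ (K : ℝ) * ‖y - w‖ := by
      have := hf.dist_le_mul y hyball w (Metric.mem_ball_self hr)
      rw [Real.dist_eq, dist_eq_norm] at this
      exact (le_abs_self _).trans this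
    have h3 : (⟪z, y - w⟫ : ℝ) = s * ‖z‖^2 := by
      rw [hyd, real_inner_smul_right, real_inner_self_eq_norm_sq]
    have h4 : s * ‖z‖^2 ≤ (K + ε) * (s * ‖z‖) := by
      rw [← h3]
      have := h1
      rw [hynorm] at this h2
      nlinarith
    have := le_of_mul_le_mul_right (by nlinarith [h4] : ‖z‖ * s ≤ (K + ε) * s) hspos
    linarith [this]
  by_contra hcon
  push_neg at hcon
  have : ‖z‖ ≤ K + (‖z‖ - K)/2 := key _ (by linarith)
  linarith


noncomputable def sfun (u q : E) (t : ℝ) (w : E) : ℝ := ⟪u, w - q⟫ / (t * ‖u‖^2)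

noncomputable def vfun (u q w : E) : E := (w - q) - ((‖u‖^2)⁻¹ * ⟪u, w - q⟫) • u

noncomputable def Psi (u q : E) (t c M C : ℝ) (w : E) : ℝ :=
  -(c/‖u‖^2 * ⟪u, w - q⟫) + M*‖vfun u q w‖^2 + C*(max (sfun u q t w - 1) 0)^2

lemma inner_sub_hasFDerivAt (u q w : E) :
    HasFDerivAt (fun w : E => ⟪u, w - q⟫) (innerSL ℝ u) w := by
  have h := ((innerSL ℝ u).hasFDerivAt (x := w - q)).comp w ((hasFDerivAt_id w).sub_const q)
  exact h

lemma vfun_perp (u q w : E) : ⟪u, vfun u q w⟫ = 0 := by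
  rcases eq_or_ne u 0 with h | h
  · simp [h]
  have hun : (0:ℝ) < ‖u‖ := norm_pos_iff.mpr h
  unfold vfun
  rw [inner_sub_right, inner_smul_right, real_inner_self_eq_norm_sq]
  field_simp; ring

lemma sfun_hasFDerivAt (u q : E) (t : ℝ) (w : E) :
    HasFDerivAt (sfun u q t) ((t * ‖u‖^2)⁻¹ • (innerSL ℝ u : E →L[ℝ] ℝ)) w := by
  have h := (inner_sub_hasFDerivAt u q w).const_mul ((t * ‖u‖^2)⁻¹)
  have heq : (fun w : E => (t * ‖u‖^2)⁻¹ * ⟪u, w - q⟫) = sfun u q t := by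
    funext w; unfold sfun; rw [div_eq_inv_mul]
  rw [heq] at h
  exact h

lemma vfun_hasFDerivAt (u q : E) (w : E) :
    HasFDerivAt (vfun u q)
      (ContinuousLinearMap.id ℝ E - (‖u‖^2)⁻¹ • ((innerSL ℝ u).smulRight u)) w := by
  unfold vfun
  have h1 : HasFDerivAt (fun w : E => w - q) (ContinuousLinearMap.id ℝ E) w :=
    (hasFDerivAt_id w).sub_const q
  have h2 : HasFDerivAt (fun w : E => ((‖u‖^2)⁻¹ * ⟪u, w - q⟫) • u)
      ((‖u‖^2)⁻¹ • ((innerSL ℝ u).smulRight u)) w := by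
    have h3 := ((inner_sub_hasFDerivAt u q w).const_mul ((‖u‖^2)⁻¹)).smul_const u
    convert h3 using 1
    ext v
    simp [ContinuousLinearMap.smulRight_apply, smul_smul, mul_comm]
  exact h1.sub h2

lemma normsq_vfun_hasFDerivAt (u q : E) (w : E) :
    HasFDerivAt (fun w : E => ‖vfun u q w‖^2) ((2:ℝ) • (innerSL ℝ (vfun u q w) : E →L[ℝ] ℝ)) w := by
  have hv := vfun_hasFDerivAt u q w
  have h := hv.inner ℝ hv
  have heq : (fun w : E => ⟪vfun u q w, vfun u q w⟫) = (fun w : E => ‖vfun u q w‖^2) := by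
    funext w; rw [real_inner_self_eq_norm_sq]
  rw [heq] at h
  convert h using 1
  rfl
  rfl
  ext y
  simp only [ContinuousLinearMap.smul_apply, ContinuousLinearMap.comp_apply,
    fderivInnerCLM_apply, ContinuousLinearMap.prod_apply, innerSL_apply_apply, smul_eq_mul]
  have hP : ∀ z : E, ⟪vfun u q w, (ContinuousLinearMap.id ℝ E - (‖u‖^2)⁻¹ • ((innerSL ℝ u).smulRight u)) z⟫
      = ⟪vfun u q w, z⟫ := by
    intro z
    simp only [ContinuousLinearMap.sub_apply, ContinuousLinearMap.id_apply,
      ContinuousLinearMap.smul_apply, ContinuousLinearMap.smulRight_apply, innerSL_apply_apply]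
    rw [inner_sub_right, inner_smul_right, inner_smul_right]
    have : ⟪vfun u q w, u⟫ = 0 := by
      rw [real_inner_comm]; exact vfun_perp u q w
    rw [this]; ring
  rw [hP, real_inner_comm (vfun u q w)]
  · rw [hP]; ring

lemma Psi_hasFDerivAt (u q : E) (hu : u ≠ 0) {t c M C : ℝ} (ht : 0 < t) (hC : 0 ≤ C)
    (hM : 0 ≤ M) (w : E) :
    ∃ (Dm : E →L[ℝ] ℝ) (d : E), HasFDerivAt (Psi u q t c M C) Dm w ∧
      (∀ h, Dm h = ⟪d, h⟫) ∧ ⟪-d, u⟫ ≤ c := by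
  have hun : (0:ℝ) < ‖u‖ := norm_pos_iff.mpr hu
  set γ : ℝ := C * (2 * max (sfun u q t w - 1) 0) * (t*‖u‖^2)⁻¹ with hγ
  have hγnn : 0 ≤ γ := by
    have h1 : (0:ℝ) ≤ max (sfun u q t w - 1) 0 := le_max_right _ _
    have h2 : (0:ℝ) ≤ (t*‖u‖^2)⁻¹ := by positivity
    positivity
  refine ⟨-(c/‖u‖^2) • (innerSL ℝ u : E →L[ℝ] ℝ) + (2*M) • (innerSL ℝ (vfun u q w) : E →L[ℝ] ℝ)
    + γ • (innerSL ℝ u : E →L[ℝ] ℝ),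
    (γ - c/‖u‖^2) • u + (2*M) • (vfun u q w), ?_, ?_, ?_⟩
  · have h1 := (inner_sub_hasFDerivAt u q w).const_mul (c/‖u‖^2)
    have h2 := (normsq_vfun_hasFDerivAt u q w).const_mul M
    have h3 : HasFDerivAt (fun w => C*(max (sfun u q t w - 1) 0)^2)
        (γ • (innerSL ℝ u : E →L[ℝ] ℝ)) w := by
      have hd := (psq_hasDerivAt (sfun u q t w - 1)).comp_hasFDerivAt w
        ((sfun_hasFDerivAt u q t w).sub_const 1)
      have hd2 := hd.const_mul C
      convert hd2 using 1
      rfl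
      rfl
      rfl
      ext y
      simp only [ContinuousLinearMap.smul_apply, innerSL_apply_apply, smul_eq_mul,
        ContinuousLinearMap.smulRight_apply, ContinuousLinearMap.one_apply]
      ring
    have hsum := ((h1.neg.add h2).add h3)
    have hfun : (fun x => -(c / ‖u‖ ^ 2 * ⟪u, x - q⟫) + M * ‖vfun u q x‖ ^ 2
        + C * (max (sfun u q t x - 1) 0) ^ 2) = Psi u q t c M C := by
      funext w'; unfold Psi; ring
    have hCLM : (-((c / ‖u‖ ^ 2) • (innerSL ℝ u : E →L[ℝ] ℝ)) + M • (2:ℝ) • (innerSL ℝ (vfun u q w) : E →L[ℝ] ℝ) + γ • (innerSL ℝ u : E →L[ℝ] ℝ))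
        = (-(c/‖u‖^2) • (innerSL ℝ u : E →L[ℝ] ℝ) + (2*M) • (innerSL ℝ (vfun u q w) : E →L[ℝ] ℝ)
          + γ • (innerSL ℝ u : E →L[ℝ] ℝ)) := by
      ext y
      simp only [ContinuousLinearMap.add_apply, ContinuousLinearMap.smul_apply,
        ContinuousLinearMap.neg_apply, innerSL_apply_apply, smul_eq_mul]
      ring
    rw [hCLM] at hsum
    rw [← hfun]
    exact hsum
  · intro h
    simp only [ContinuousLinearMap.add_apply, ContinuousLinearMap.smul_apply,
      ContinuousLinearMap.neg_apply, innerSL_apply_apply, smul_eq_mul]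
    rw [inner_add_left, real_inner_smul_left, real_inner_smul_left]
    ring
  · rw [inner_neg_left, inner_add_left, real_inner_smul_left, real_inner_smul_left]
    have hvu : ⟪vfun u q w, u⟫ = 0 := by rw [real_inner_comm]; exact vfun_perp u q w
    rw [hvu, real_inner_self_eq_norm_sq]
    have : γ * ‖u‖^2 ≥ 0 := by positivity
    have hc' : (c/‖u‖^2) * ‖u‖^2 = c := by field_simp
    nlinarith

lemma sfun_q (u q : E) (t : ℝ) : sfun u q t q = 0 := by unfold sfun; simp

lemma vfun_q (u q : E) : vfun u q q = 0 := by unfold vfun; simp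

lemma sfun_b (u q : E) {t : ℝ} (hu : u ≠ 0) (ht : 0 < t) : sfun u q t (q + t • u) = 1 := by
  have hun : (0:ℝ) < ‖u‖ := norm_pos_iff.mpr hu
  unfold sfun
  rw [add_sub_cancel_left, real_inner_smul_right, real_inner_self_eq_norm_sq]
  field_simp

lemma vfun_b (u q : E) {t : ℝ} (hu : u ≠ 0) : vfun u q (q + t • u) = 0 := by
  rcases eq_or_ne ‖u‖ 0 with h | h
  · simp [norm_eq_zero.mp h, vfun]
  unfold vfun
  rw [add_sub_cancel_left, real_inner_smul_right, real_inner_self_eq_norm_sq]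
  have : (‖u‖ ^ 2)⁻¹ * (t * ‖u‖ ^ 2) = t := by field_simp
  rw [this, sub_eq_zero]

lemma vfun_decomp (u q : E) {t : ℝ} (hu : u ≠ 0) (ht : 0 < t) (w : E) :
    w - q = (sfun u q t w * t) • u + vfun u q w := by
  have hun : (0:ℝ) < ‖u‖ := norm_pos_iff.mpr hu
  have : sfun u q t w * t = (‖u‖^2)⁻¹ * ⟪u, w - q⟫ := by
    unfold sfun; field_simp
  rw [this]; unfold vfun; abel

lemma sfun_continuous (u q : E) (t : ℝ) : Continuous (sfun u q t) := by
  unfold sfun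
  exact ((innerSL ℝ u).continuous.comp (continuous_id.sub continuous_const)).div_const _

lemma vfun_continuous (u q : E) : Continuous (vfun u q) := by
  unfold vfun
  exact (continuous_id.sub continuous_const).sub
    ((continuous_const.mul ((innerSL ℝ u).continuous.comp (continuous_id.sub continuous_const))).smul continuous_const)

lemma Psi_continuous (u q : E) (t c M C : ℝ) : Continuous (Psi u q t c M C) := by
  unfold Psi
  have h1 : Continuous fun w : E => ⟪u, w - q⟫ :=
    (innerSL ℝ u).continuous.comp (continuous_id.sub continuous_const)
  have h2 : Continuous fun w : E => ‖vfun u q w‖^2 := ((vfun_continuous u q).norm).pow 2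
  have h3 : Continuous fun w : E => (max (sfun u q t w - 1) 0)^2 :=
    (((sfun_continuous u q t).sub continuous_const).max continuous_const).pow 2
  exact ((continuous_const.mul h1).neg.add (continuous_const.mul h2)).add
    (continuous_const.mul h3)

lemma Psi_apply (u q : E) (t c M C : ℝ) (w : E) : Psi u q t c M C w =
    -(c/‖u‖^2 * ⟪u, w - q⟫) + M*‖vfun u q w‖^2 + C*(max (sfun u q t w - 1) 0)^2 := rfl

attribute [irreducible] Psi sfun vfun

set_option maxHeartbeats 2000000 in
lemma exists_fsub_small_pairing [ProperSpace E]
    {f : E → ℝ} {p u : E} (hu : u ≠ 0) {K : NNReal} {r : ℝ} (hr : 0 < r)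
    (hf : LipschitzOnWith K f (Metric.ball p r))
    {q : E} {t c : ℝ} (ht : 0 < t) (hc : 0 < c)
    (hside : ‖q - p‖ + (2*t*‖u‖ + t) < r)
    (hbad : f (q + t • u) < f q + c * t) :
    ∃ w z, z ∈ FrechetSubdiff f w ∧ ‖w - p‖ ≤ ‖q - p‖ + (2*t*‖u‖ + t) ∧
      ⟪z, u⟫ ≤ c ∧ ‖z‖ ≤ K := by
  have hun : (0:ℝ) < ‖u‖ := norm_pos_iff.mpr hu
  obtain ⟨ε, hεdef, hεpos⟩ : ∃ ε : ℝ, ε = f q + c * t - f (q + t • u) ∧ 0 < ε :=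
    ⟨_, rfl, by linarith⟩
  obtain ⟨Lg, hLgdef, hLgpos⟩ : ∃ Lg : ℝ, Lg = (K:ℝ) + c / ‖u‖ ∧ 0 < Lg :=
    ⟨_, rfl, by have := K.2; positivity⟩
  obtain ⟨ρ, hρpos, hρt, hρε⟩ : ∃ ρ : ℝ, 0 < ρ ∧ ρ ≤ t ∧ Lg * ρ ≤ ε / 2 := by
    refine ⟨min t (ε/(2*Lg + 2)), lt_min ht (by positivity), min_le_left _ _, ?_⟩
    have h1 : min t (ε/(2*Lg + 2)) ≤ ε/(2*Lg + 2) := min_le_right _ _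
    have h2 : Lg * min t (ε/(2*Lg + 2)) ≤ Lg * (ε/(2*Lg + 2)) := by nlinarith
    have h3 : Lg * (ε/(2*Lg + 2)) ≤ ε / 2 := by
      rw [← mul_div_assoc, div_le_div_iff₀ (by positivity : (0:ℝ) < 2*Lg+2) two_pos]
      nlinarith
    linarith
  obtain ⟨R, hRdef, hRpos, hRle⟩ : ∃ R : ℝ, R = 2*t*‖u‖ + ρ ∧ 0 < R ∧ R ≤ 2*t*‖u‖ + t :=
    ⟨_, rfl, by positivity, by nlinarith⟩
  obtain ⟨B, hBdef, hBpos⟩ : ∃ B : ℝ, B = Lg * R ∧ 0 < B := ⟨_, rfl, by positivity⟩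
  obtain ⟨M, hMpos, hMB⟩ : ∃ M : ℝ, 0 < M ∧ B + 1 ≤ M * (ρ/2)^2 := by
    refine ⟨4*(B+1)/ρ^2, by positivity, ?_⟩
    rw [div_mul_eq_mul_div, le_div_iff₀ (by positivity)]
    nlinarith
  obtain ⟨C, hCpos, hCB⟩ : ∃ C : ℝ, 0 < C ∧ B + 1 ≤ C * (1/2)^2 :=
    ⟨4*(B+1), by positivity, by nlinarith⟩
  -- the domain
  obtain ⟨Dom, hDom⟩ : ∃ D : Set E, D = {w : E | sfun u q t w ∈ Set.Icc (0:ℝ) 2 ∧ ‖vfun u q w‖ ≤ ρ} :=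
    ⟨_, rfl⟩
  have hDommem : ∀ w, w ∈ Dom ↔ (0 ≤ sfun u q t w ∧ sfun u q t w ≤ 2) ∧ ‖vfun u q w‖ ≤ ρ := by
    intro w; rw [hDom]; exact Iff.rfl
  have hnormwq : ∀ w ∈ Dom, ‖w - q‖ ≤ R := by
    intro w hw
    obtain ⟨⟨hs0, hs2⟩, hvρ⟩ := (hDommem w).mp hw
    rw [vfun_decomp u q hu ht w]
    calc ‖(sfun u q t w * t) • u + vfun u q w‖
        ≤ ‖(sfun u q t w * t) • u‖ + ‖vfun u q w‖ := norm_add_le _ _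
      _ = |sfun u q t w * t| * ‖u‖ + ‖vfun u q w‖ := by rw [norm_smul, Real.norm_eq_abs]
      _ ≤ 2*t*‖u‖ + ρ := by
          have h1 : |sfun u q t w * t| ≤ 2 * t := by
            rw [abs_mul, abs_of_pos ht, abs_of_nonneg hs0]
            nlinarith
          nlinarith
      _ = R := hRdef.symm
  have hDomBall : Dom ⊆ Metric.ball p r := by
    intro w hw
    rw [Metric.mem_ball, dist_eq_norm]
    calc ‖w - p‖ ≤ ‖w - q‖ + ‖q - p‖ := norm_sub_le_norm_sub_add_norm_sub w q p
      _ ≤ R + ‖q - p‖ := by linarith [hnormwq w hw]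
      _ < r := by linarith
  have hqDom : q ∈ Dom := by
    rw [hDommem]
    refine ⟨⟨?_, ?_⟩, ?_⟩
    · rw [sfun_q]
    · rw [sfun_q]; norm_num
    · rw [vfun_q]; simpa using hρpos.le
  have hbDom : (q + t • u) ∈ Dom := by
    rw [hDommem]
    refine ⟨⟨?_, ?_⟩, ?_⟩
    · rw [sfun_b u q hu ht]; norm_num
    · rw [sfun_b u q hu ht]; norm_num
    · rw [vfun_b u q hu]; simpa using hρpos.le
  have hDomCompact : IsCompact Dom := by
    rw [hDom]
    apply Metric.isCompact_of_isClosed_isBounded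
    · apply IsClosed.inter
      · exact isClosed_Icc.preimage (sfun_continuous u q t)
      · exact (isClosed_Iic (a := ρ)).preimage ((vfun_continuous u q).norm)
    · apply Bornology.IsBounded.subset (Metric.isBounded_closedBall (x := q) (r := R))
      intro w hw
      rw [Metric.mem_closedBall, dist_eq_norm]
      exact hnormwq w (hDom ▸ hw)
  -- the function to minimize
  obtain ⟨G, hG⟩ : ∃ G : E → ℝ, G = fun w => f w + Psi u q t c M C w := ⟨_, rfl⟩
  have hGapp : ∀ w, G w = f w + Psi u q t c M C w := by intro w; rw [hG]
  have hGcont : ContinuousOn G Dom := by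
    rw [hG]
    exact (hf.continuousOn.mono hDomBall).add (Psi_continuous u q t c M C).continuousOn
  obtain ⟨w₀, hw₀Dom, hw₀min⟩ := hDomCompact.exists_isMinOn ⟨q, hqDom⟩ hGcont
  -- values at q and b
  have hΨq : Psi u q t c M C q = 0 := by
    unfold Psi; rw [sfun_q, vfun_q]; simp
  have hΨb : Psi u q t c M C (q + t • u) = -(c*t) := by
    unfold Psi
    rw [sfun_b u q hu ht, vfun_b u q hu, add_sub_cancel_left,
      real_inner_smul_right, real_inner_self_eq_norm_sq]
    have : c / ‖u‖ ^ 2 * (t * ‖u‖ ^ 2) = c * t := by field_simp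
    rw [this]; norm_num
  have hGb : G (q + t • u) = f q - ε := by
    rw [hGapp, hΨb, hεdef]; ring
  have hGw₀ : G w₀ ≤ f q - ε := by
    have := hw₀min hbDom
    simp only [Set.mem_setOf_eq] at this
    rw [hGb] at this; exact this
  -- lower bound f w - ℓ w on Dom
  have hlow : ∀ w ∈ Dom, f q - B ≤ f w - c/‖u‖^2 * ⟪u, w - q⟫ := by
    intro w hw
    have h1 : |f w - f q| ≤ (K:ℝ) * ‖w - q‖ := by
      have := hf.dist_le_mul w (hDomBall hw) q (hDomBall hqDom)
      rw [Real.dist_eq, dist_eq_norm] at this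
      exact this
    have h2 : |⟪u, w - q⟫| ≤ ‖u‖ * ‖w - q‖ := by
      have := norm_inner_le_norm (𝕜 := ℝ) u (w - q)
      rwa [Real.norm_eq_abs] at this
    have h3 : ‖w - q‖ ≤ R := hnormwq w hw
    have h4 : c/‖u‖^2 * |⟪u, w - q⟫| ≤ c/‖u‖ * R := by
      have hcu : 0 ≤ c/‖u‖^2 := by positivity
      calc c/‖u‖^2 * |⟪u, w - q⟫| ≤ c/‖u‖^2 * (‖u‖ * ‖w - q‖) :=
            mul_le_mul_of_nonneg_left h2 hcu
        _ = c/‖u‖ * ‖w - q‖ := by field_simp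
        _ ≤ c/‖u‖ * R := mul_le_mul_of_nonneg_left h3 (by positivity)
    have h5 : (K:ℝ) * ‖w - q‖ ≤ (K:ℝ) * R := mul_le_mul_of_nonneg_left h3 K.2
    have habs1 := abs_le.mp h1
    have h6 : c/‖u‖^2 * ⟪u, w - q⟫ ≤ c/‖u‖ * R := by
      calc c/‖u‖^2 * ⟪u, w - q⟫ ≤ c/‖u‖^2 * |⟪u, w - q⟫| :=
            mul_le_mul_of_nonneg_left (le_abs_self _) (by positivity)
        _ ≤ c/‖u‖ * R := h4
    have h7 : f q - f w ≤ (K:ℝ) * R := by linarith [habs1.1]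
    have hBeq : B = ((K:ℝ) + c/‖u‖) * R := by rw [hBdef, hLgdef]
    have : (K:ℝ)*R + c/‖u‖*R = B := by rw [hBeq]; ring
    linarith [h6, h7]
  have hPsiApp : ∀ w, Psi u q t c M C w = -(c/‖u‖^2 * ⟪u, w - q⟫) + M*‖vfun u q w‖^2
      + C*(max (sfun u q t w - 1) 0)^2 := Psi_apply u q t c M C
  have hlow₀ := hlow w₀ hw₀Dom
  have hG₀ : G w₀ = f w₀ + Psi u q t c M C w₀ := hGapp w₀
  have hpen2 : 0 ≤ C*(max (sfun u q t w₀ - 1) 0)^2 := by positivity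
  have hpen1 : 0 ≤ M*‖vfun u q w₀‖^2 := by positivity
  -- small orthogonal component
  have hv₀ : ‖vfun u q w₀‖ < ρ/2 := by
    have h1 : M*‖vfun u q w₀‖^2 ≤ B - ε := by
      have := hPsiApp w₀
      linarith [hGw₀, hlow₀, hpen2, hG₀.symm.trans_le hGw₀, (by linarith [hG₀ ▸ hGw₀] :
        f w₀ + Psi u q t c M C w₀ ≤ f q - ε), this ▸ (rfl : Psi u q t c M C w₀ = Psi u q t c M C w₀)]
    by_contra hcon
    push_neg at hcon
    have h2 : (ρ/2)^2 ≤ ‖vfun u q w₀‖^2 := pow_le_pow_left₀ (by positivity) hcon 2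
    have h3 : M*(ρ/2)^2 ≤ M*‖vfun u q w₀‖^2 := mul_le_mul_of_nonneg_left h2 hMpos.le
    linarith
  -- s component below 3/2
  have hs₀lt : sfun u q t w₀ < 3/2 := by
    by_contra hcon
    push_neg at hcon
    have h1 : (1/2 : ℝ) ≤ max (sfun u q t w₀ - 1) 0 := le_max_of_le_left (by linarith)
    have h2 : ((1:ℝ)/2)^2 ≤ (max (sfun u q t w₀ - 1) 0)^2 := pow_le_pow_left₀ (by norm_num) h1 2
    have h3 : B + 1 ≤ C*(max (sfun u q t w₀ - 1) 0)^2 :=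
      le_trans hCB (mul_le_mul_of_nonneg_left h2 hCpos.le)
    have h4 : f q - ε ≥ G w₀ := hGw₀
    rw [hG₀, hPsiApp w₀] at h4
    linarith [hlow₀]
  -- s component positive
  have hs₀pos : 0 < sfun u q t w₀ := by
    rcases ((hDommem w₀).mp hw₀Dom).1.1.lt_or_eq with h | h
    · exact h
    have hip0 : ⟪u, w₀ - q⟫ = 0 := by
      have := h.symm
      unfold sfun at this
      field_simp at this
      simpa using this
    have hweq : w₀ - q = vfun u q w₀ := by
      unfold vfun; rw [hip0]; simp
    have hwnorm : ‖w₀ - q‖ ≤ ρ := by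
      rw [hweq]; linarith [hv₀, hρpos]
    have hfK : |f w₀ - f q| ≤ (K:ℝ) * ‖w₀ - q‖ := by
      have := hf.dist_le_mul w₀ (hDomBall hw₀Dom) q (hDomBall hqDom)
      rw [Real.dist_eq, dist_eq_norm] at this
      exact this
    have hKLg : (K:ℝ) ≤ Lg := by
      rw [hLgdef]
      have hcu : 0 < c/‖u‖ := by positivity
      linarith
    have h5 : f q - f w₀ ≤ Lg * ρ := by
      have h6 := (abs_le.mp hfK).1
      have h7 : (K:ℝ) * ‖w₀ - q‖ ≤ Lg * ρ :=
        mul_le_mul hKLg hwnorm (norm_nonneg _) hLgpos.le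
      linarith
    have hℓ0 : c/‖u‖^2 * ⟪u, w₀ - q⟫ = 0 := by rw [hip0]; ring
    have h8 : f w₀ + Psi u q t c M C w₀ ≤ f q - ε := by
      have h8' := hGw₀
      rw [hGapp w₀] at h8'
      exact h8'
    have h9 := hPsiApp w₀
    rw [hℓ0] at h9
    clear hw₀min hGcont hDomCompact hDommem hDom hf hbad hlow hlow₀ hnormwq hDomBall hPsiApp
    have hPw : 0 ≤ Psi u q t c M C w₀ := by rw [h9]; linarith [hpen1, hpen2]
    linarith [hρε, h8, hPw, h5, hεpos]
  -- interior local minimum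
  have hUopen : IsOpen {w : E | 0 < sfun u q t w ∧ sfun u q t w < 2 ∧ ‖vfun u q w‖ < ρ} := by
    refine IsOpen.inter (isOpen_lt continuous_const (sfun_continuous u q t)) ?_
    exact IsOpen.inter (isOpen_lt (sfun_continuous u q t) continuous_const)
      (isOpen_lt ((vfun_continuous u q).norm) continuous_const)
  have hw₀U : w₀ ∈ {w : E | 0 < sfun u q t w ∧ sfun u q t w < 2 ∧ ‖vfun u q w‖ < ρ} :=
    ⟨hs₀pos, by linarith, by linarith⟩
  have hUsub : {w : E | 0 < sfun u q t w ∧ sfun u q t w < 2 ∧ ‖vfun u q w‖ < ρ} ⊆ Dom := by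
    intro w hw
    rw [hDommem]
    exact ⟨⟨hw.1.le, hw.2.1.le⟩, hw.2.2.le⟩
  have hminev : ∀ᶠ y in nhds w₀, f w₀ + Psi u q t c M C w₀ ≤ f y + Psi u q t c M C y := by
    filter_upwards [hUopen.mem_nhds hw₀U] with y hy
    have := hw₀min (hUsub hy)
    simp only [Set.mem_setOf_eq] at this
    rw [hGapp, hGapp] at this
    exact this
  obtain ⟨Dm, d, hDer, hDm, hdu⟩ := Psi_hasFDerivAt u q hu ht hCpos.le hMpos.le w₀
  have hz : -d ∈ FrechetSubdiff f w₀ := fsub_of_localmin hDer hDm hminev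
  refine ⟨w₀, -d, hz, ?_, hdu, ?_⟩
  · calc ‖w₀ - p‖ ≤ ‖w₀ - q‖ + ‖q - p‖ := norm_sub_le_norm_sub_add_norm_sub w₀ q p
      _ ≤ R + ‖q - p‖ := by linarith [hnormwq w₀ hw₀Dom]
      _ ≤ ‖q - p‖ + (2*t*‖u‖ + t) := by linarith
  · have hr' : 0 < r - (‖q - p‖ + (2*t*‖u‖ + t)) := by linarith
    have hball : Metric.ball w₀ (r - (‖q - p‖ + (2*t*‖u‖ + t))) ⊆ Metric.ball p r := by
      intro y hy
      rw [Metric.mem_ball] at hy ⊢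
      have hd1 : dist w₀ p ≤ ‖q - p‖ + (2*t*‖u‖ + t) := by
        rw [dist_eq_norm]
        calc ‖w₀ - p‖ ≤ ‖w₀ - q‖ + ‖q - p‖ := norm_sub_le_norm_sub_add_norm_sub w₀ q p
          _ ≤ ‖q - p‖ + (2*t*‖u‖ + t) := by linarith [hnormwq w₀ hw₀Dom]
      calc dist y p ≤ dist y w₀ + dist w₀ p := dist_triangle y w₀ p
        _ < r := by linarith
    exact fsub_norm_le hr' (hf.mono hball) hz


set_option maxHeartbeats 1000000 in
lemma uniform_increase [ProperSpace E] {f : E → ℝ} {p u : E} (hu : u ≠ 0)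
    (hlf : LocallyLipschitz f)
    (hpos : ∀ z ∈ MordukhovichSubdiff f p, 0 < ⟪z, u⟫) :
    ∃ δ > (0:ℝ), ∃ c > (0:ℝ), ∀ q ∈ Metric.ball p δ, ∀ t : ℝ, 0 < t → t < δ →
      f q + c * t ≤ f (q + t • u) := by
  obtain ⟨K, S, hS, hK⟩ := hlf p
  obtain ⟨r, hrpos, hrS⟩ := Metric.mem_nhds_iff.mp hS
  have hf : LipschitzOnWith K f (Metric.ball p r) := hK.mono hrS
  by_contra hcon
  push_neg at hcon
  have key : ∀ k : ℕ, ∃ w z : E, z ∈ FrechetSubdiff f w ∧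
      ‖w - p‖ ≤ (2 + 2*‖u‖) * (min (1/((k:ℝ)+1)) (r/(2*(2+2*‖u‖)))) ∧
      ⟪z, u⟫ ≤ 1/((k:ℝ)+1) ∧ ‖z‖ ≤ K := by
    intro k
    have hun : (0:ℝ) < ‖u‖ := norm_pos_iff.mpr hu
    set δ := min (1/((k:ℝ)+1)) (r/(2*(2+2*‖u‖))) with hδ
    have hδpos : 0 < δ := by
      apply lt_min
      · positivity
      · positivity
    have hδr : δ * (2 + 2*‖u‖) ≤ r/2 := by
      have h1 : δ ≤ r/(2*(2+2*‖u‖)) := min_le_right _ _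
      have h2 : (0:ℝ) < 2 + 2*‖u‖ := by positivity
      calc δ * (2 + 2*‖u‖) ≤ (r/(2*(2+2*‖u‖))) * (2 + 2*‖u‖) :=
            mul_le_mul_of_nonneg_right h1 h2.le
        _ = r/2 := by field_simp
    obtain ⟨q, hqball, t, htpos, htδ, hbad⟩ := hcon δ hδpos (1/((k:ℝ)+1)) (by positivity)
    have hqp : ‖q - p‖ < δ := by rw [← dist_eq_norm]; exact hqball
    have hside : ‖q - p‖ + (2*t*‖u‖ + t) < r := by
      have h3 : 2*t*‖u‖ + t ≤ δ*(2*‖u‖) + δ := by nlinarith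
      have : ‖q - p‖ + (2*t*‖u‖ + t) < δ + (δ*(2*‖u‖) + δ) := by linarith
      have h4 : δ + (δ*(2*‖u‖) + δ) = δ * (2 + 2*‖u‖) := by ring
      linarith [hδr, hrpos]
    obtain ⟨w, z, hzF, hwp, hzu, hzK⟩ :=
      exists_fsub_small_pairing hu hrpos hf htpos (by positivity : (0:ℝ) < 1/((k:ℝ)+1))
        hside (by linarith [hbad] : f (q + t • u) < f q + 1/((k:ℝ)+1) * t)
    refine ⟨w, z, hzF, ?_, hzu, hzK⟩
    calc ‖w - p‖ ≤ ‖q - p‖ + (2*t*‖u‖ + t) := hwp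
      _ ≤ δ + (δ*(2*‖u‖) + δ) := by nlinarith
      _ = (2 + 2*‖u‖) * δ := by ring
  choose w z hzF hwp hzu hzK using key
  -- w tends to p
  have hwlim : Filter.Tendsto w Filter.atTop (nhds p) := by
    rw [tendsto_iff_norm_sub_tendsto_zero]
    apply squeeze_zero (fun k => norm_nonneg _) hwp
    have h1 : Filter.Tendsto (fun k : ℕ => (2 + 2*‖u‖) * (1/((k:ℝ)+1)))
        Filter.atTop (nhds ((2 + 2*‖u‖) * 0)) :=
      tendsto_one_div_add_atTop_nhds_zero_nat.const_mul _
    rw [mul_zero] at h1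
    apply squeeze_zero
    · intro k
      have : (0:ℝ) < 2 + 2*‖u‖ := by positivity
      have h2 : 0 < min (1/((k:ℝ)+1)) (r/(2*(2+2*‖u‖))) := by
        apply lt_min <;> positivity
      positivity
    · intro k
      have h3 : min (1/((k:ℝ)+1)) (r/(2*(2+2*‖u‖))) ≤ 1/((k:ℝ)+1) := min_le_left _ _
      have : (0:ℝ) ≤ 2 + 2*‖u‖ := by positivity
      exact mul_le_mul_of_nonneg_left h3 this
    · exact h1
  -- extract convergent subsequence of z
  have hzball : ∀ k, z k ∈ Metric.closedBall (0:E) K := by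
    intro k
    rw [Metric.mem_closedBall, dist_zero_right]
    exact hzK k
  obtain ⟨zlim, _, φ, hφ, hzlim⟩ :=
    tendsto_subseq_of_bounded Metric.isBounded_closedBall hzball
  have hMord : zlim ∈ MordukhovichSubdiff f p := by
    refine ⟨w ∘ φ, z ∘ φ, fun k => hzF (φ k), ?_, ?_, hzlim⟩
    · exact hwlim.comp hφ.tendsto_atTop
    · exact (hlf.continuous.tendsto p).comp (hwlim.comp hφ.tendsto_atTop)
  have hfinal := hpos zlim hMord
  have hinner : Filter.Tendsto (fun k => ⟪z (φ k), u⟫) Filter.atTop (nhds ⟪zlim, u⟫) :=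
    hzlim.inner tendsto_const_nhds
  have hle : (⟪zlim, u⟫ : ℝ) ≤ 0 := by
    have hseq : Filter.Tendsto (fun k : ℕ => 1/((φ k : ℝ)+1)) Filter.atTop (nhds 0) :=
      tendsto_one_div_add_atTop_nhds_zero_nat.comp hφ.tendsto_atTop
    exact le_of_tendsto_of_tendsto hinner hseq
      (Filter.Eventually.of_forall fun k => hzu (φ k))
  linarith

set_option maxHeartbeats 2000000 in
theorem stmt_12 (n : ℕ) (φ : EuclideanSpace ℝ (Fin n) → ℝ)
    (hφ : Differentiable ℝ φ) (hlip : LocallyLipschitz (gradient φ))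
    (hpd : ∀ x u : EuclideanSpace ℝ (Fin n), u ≠ 0 → ⟪gradient φ x, u⟫ = 0 →
      ∀ z ∈ MordukhovichSubdiff (fun y => ⟪u, gradient φ y⟫) x, 0 < ⟪z, u⟫) :
    ∀ x y : EuclideanSpace ℝ (Fin n), x ≠ y → φ y ≤ φ x →
      ⟪gradient φ x, y - x⟫ < 0 := by
  intro x y hxy hφxy
  by_contra hcon
  push_neg at hcon
  set u := y - x with hudef
  have hu : u ≠ 0 := sub_ne_zero.mpr (Ne.symm hxy)
  have hun : (0:ℝ) < ‖u‖ := norm_pos_iff.mpr hu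
  -- the 1-D functions
  set h : ℝ → ℝ := fun t => ⟪gradient φ (x + t • u), u⟫ with hhdef
  set g : ℝ → ℝ := fun t => φ (x + t • u) with hgdef
  have hcurve : ∀ t : ℝ, HasDerivAt (fun t : ℝ => x + t • u) u t := by
    intro t
    simpa using ((hasDerivAt_id t).smul_const u).const_add x
  have hg : ∀ t : ℝ, HasDerivAt g (h t) t := by
    intro t
    have hgrad := (hφ (x + t • u)).hasGradientAt
    have hfd := hasGradientAt_iff_hasFDerivAt.mp hgrad
    have := hfd.comp_hasDerivAt t (hcurve t)
    simp [hgdef, hhdef, InnerProductSpace.toDual_apply_apply] at this ⊢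
    exact this
  have hconth : Continuous h := by
    apply Continuous.inner
    · exact hlip.continuous.comp (continuous_const.add (continuous_id.smul continuous_const))
    · exact continuous_const
  have hcontg : Continuous g :=
    hφ.continuous.comp (continuous_const.add (continuous_id.smul continuous_const))
  have hflip : LocallyLipschitz (fun w : EuclideanSpace ℝ (Fin n) => ⟪u, gradient φ w⟫) :=
    ((innerSL ℝ u).lipschitz.locallyLipschitz).comp hlip
  -- algebraic identities
  have hx0 : x + (0:ℝ) • u = x := by simp
  have hx1 : x + (1:ℝ) • u = y := by rw [hudef]; simp
  have hh0 : h 0 = ⟪gradient φ x, u⟫ := by rw [hhdef]; simp only [hx0]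
  have hcon' : 0 ≤ h 0 := by rw [hh0]; exact hcon
  -- Lemma L : local strict crossing at zeros of h
  have hL : ∀ t0 : ℝ, h t0 = 0 → ∃ δ > (0:ℝ), ∀ τ : ℝ, 0 < τ → τ < δ →
      0 < h (t0 + τ) ∧ h (t0 - τ) < 0 := by
    intro t0 ht0
    have hpzero : ⟪gradient φ (x + t0 • u), u⟫ = 0 := ht0
    have hpos := hpd (x + t0 • u) u hu hpzero
    obtain ⟨δ₀, hδ₀pos, c, hcpos, hprop⟩ := uniform_increase hu hflip hpos
    refine ⟨δ₀/(1+‖u‖), by positivity, ?_⟩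
    intro τ hτpos hτδ
    have h1u : (1:ℝ) ≤ 1 + ‖u‖ := by linarith
    have hτδ₀ : τ < δ₀ := by
      calc τ < δ₀/(1+‖u‖) := hτδ
        _ ≤ δ₀ := by
          rw [div_le_iff₀ (by positivity)]
          nlinarith
    have hτu : τ * ‖u‖ < δ₀ := by
      have h5 : τ * (1+‖u‖) < δ₀ := (lt_div_iff₀ (by positivity : (0:ℝ) < 1+‖u‖)).mp hτδ
      nlinarith
    constructor
    · -- right side
      have happ := hprop (x + t0 • u) (Metric.mem_ball_self hδ₀pos) τ hτpos hτδ₀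
      have heq1 : (x + t0 • u) + τ • u = x + (t0 + τ) • u := by
        rw [add_smul]; abel
      rw [heq1] at happ
      have heq2 : (⟪u, gradient φ (x + (t0+τ) • u)⟫ : ℝ) = h (t0 + τ) := by
        rw [hhdef]; exact real_inner_comm _ _
      have heq3 : (⟪u, gradient φ (x + t0 • u)⟫ : ℝ) = h t0 := by
        rw [hhdef]; exact real_inner_comm _ _
      rw [heq2, heq3, ht0] at happ
      nlinarith
    · -- left side
      have hqball : x + (t0 - τ) • u ∈ Metric.ball (x + t0 • u) δ₀ := by
        rw [Metric.mem_ball, dist_eq_norm]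
        have : (x + (t0 - τ) • u) - (x + t0 • u) = (-τ) • u := by
          rw [sub_smul]
          module
        rw [this, norm_smul, Real.norm_eq_abs, abs_neg, abs_of_pos hτpos]
        exact hτu
      have happ := hprop (x + (t0 - τ) • u) hqball τ hτpos hτδ₀
      have heq1 : (x + (t0 - τ) • u) + τ • u = x + t0 • u := by
        rw [sub_smul]; abel
      rw [heq1] at happ
      have heq2 : (⟪u, gradient φ (x + (t0-τ) • u)⟫ : ℝ) = h (t0 - τ) := by
        rw [hhdef]; exact real_inner_comm _ _
      have heq3 : (⟪u, gradient φ (x + t0 • u)⟫ : ℝ) = h t0 := by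
        rw [hhdef]; exact real_inner_comm _ _
      rw [heq2, heq3, ht0] at happ
      nlinarith
  -- Step 1 : h must be ≤ 0 somewhere in (0,1)
  obtain ⟨s, hsIoo, hs⟩ : ∃ s, s ∈ Set.Ioo (0:ℝ) 1 ∧ h s ≤ 0 := by
    by_contra hcon2
    push_neg at hcon2
    have hmono : StrictMonoOn g (Set.Icc (0:ℝ) 1) := by
      apply strictMonoOn_of_deriv_pos (convex_Icc 0 1) hcontg.continuousOn
      intro t ht
      rw [interior_Icc] at ht
      rw [(hg t).deriv]
      exact hcon2 t ht
    have := hmono (Set.left_mem_Icc.mpr zero_le_one) (Set.right_mem_Icc.mpr zero_le_one)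
      zero_lt_one
    rw [hgdef] at this
    simp only [hx0, hx1] at this
    linarith
  -- Step 2 : find a < s with h a > 0 and 0 ≤ a
  obtain ⟨a, ha0, has, hapos⟩ : ∃ a, 0 ≤ a ∧ a < s ∧ 0 < h a := by
    rcases hcon'.lt_or_eq with hpos0 | heq0
    · exact ⟨0, le_refl 0, hsIoo.1, hpos0⟩
    · obtain ⟨δ, hδpos, hprop⟩ := hL 0 heq0.symm
      have hmin : 0 < min (δ/2) (s/2) := lt_min (by linarith) (by linarith [hsIoo.1])
      refine ⟨min (δ/2) (s/2), hmin.le, ?_, ?_⟩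
      · calc min (δ/2) (s/2) ≤ s/2 := min_le_right _ _
          _ < s := by linarith [hsIoo.1]
      · have h1 := (hprop (min (δ/2) (s/2)) hmin
          (by calc min (δ/2) (s/2) ≤ δ/2 := min_le_left _ _
                _ < δ := by linarith)).1
        rwa [zero_add] at h1
  -- Step 3 : first zero of h after a, and contradiction
  set S := {t : ℝ | t ∈ Set.Icc a s ∧ h t ≤ 0} with hSdef
  have hSclosed : IsClosed S := by
    have : S = Set.Icc a s ∩ h ⁻¹' (Set.Iic 0) := by
      ext t; simp [hSdef, Set.mem_Icc, Set.mem_Iic, Set.mem_inter_iff]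
    rw [this]
    exact isClosed_Icc.inter (isClosed_Iic.preimage hconth)
  have hSne : S.Nonempty := ⟨s, ⟨has.le, le_refl s⟩, hs⟩
  have hSbdd : BddBelow S := ⟨a, fun t ht => ht.1.1⟩
  set t1 := sInf S with ht1def
  have ht1S : t1 ∈ S := hSclosed.csInf_mem hSne hSbdd
  have ht1le : h t1 ≤ 0 := ht1S.2
  have ht1Icc : t1 ∈ Set.Icc a s := ht1S.1
  have ht1a : a < t1 := by
    rcases ht1Icc.1.lt_or_eq with h1 | h1
    · exact h1
    · exfalso; rw [← h1] at ht1le; linarith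
  have hpre : ∀ τ ∈ Set.Ico a t1, 0 < h τ := by
    intro τ hτ
    by_contra hc
    push_neg at hc
    have : τ ∈ S := ⟨⟨hτ.1, hτ.2.le.trans ht1Icc.2⟩, hc⟩
    have := csInf_le hSbdd this
    linarith [hτ.2]
  have ht1zero : h t1 = 0 := by
    refine le_antisymm ht1le ?_
    by_contra hneg
    push_neg at hneg
    have hopen : IsOpen {τ : ℝ | h τ < 0} := isOpen_lt hconth continuous_const
    obtain ⟨η, hηpos, hη⟩ := Metric.isOpen_iff.mp hopen t1 hneg
    set τ := max a (t1 - η/2) with hτdef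
    have hτlt : τ < t1 := max_lt ht1a (by linarith)
    have hτball : τ ∈ Metric.ball t1 η := by
      rw [Metric.mem_ball, Real.dist_eq, abs_of_nonpos (by linarith)]
      have : t1 - η/2 ≤ τ := le_max_right _ _
      linarith
    have := hη hτball
    have := hpre τ ⟨le_max_left _ _, hτlt⟩
    simp only [Set.mem_setOf_eq] at *
    linarith
  obtain ⟨δ', hδ'pos, hprop'⟩ := hL t1 ht1zero
  set τ := min (δ'/2) ((t1 - a)/2) with hτdef
  have hτpos : 0 < τ := lt_min (by linarith) (by linarith)
  have hτδ' : τ < δ' := by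
    calc τ ≤ δ'/2 := min_le_left _ _
      _ < δ' := by linarith
  have hneg := (hprop' τ hτpos hτδ').2
  have hmem : t1 - τ ∈ Set.Ico a t1 := by
    constructor
    · have : τ ≤ (t1 - a)/2 := min_le_right _ _
      linarith
    · linarith
  linarith [hpre (t1 - τ) hmem]
end

section
/- Let φ : ℝⁿ → ℝ be C^{1,1} such that for every x ∈ ℝⁿ and every nonzero u ∈ ℝⁿ with ⟨∇φ(x), u⟩ = 0, there exists z with ⟨z, u⟩ > 0 such that either z belongs to the Fréchet subdifferential of y ↦ ⟨u, ∇φ(y)⟩ at x, or -z belongs to the Fréchet subdifferential of y ↦ ⟨-u, ∇φ(y)⟩ at x. Then φ is strictly quasiconvex. -/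
local notation "⟪" x ", " y "⟫" => (inner ℝ x y : ℝ)

theorem stmt_13 (n : ℕ) (φ : EuclideanSpace ℝ (Fin n) → ℝ)
    (hφ : Differentiable ℝ φ) (hlip : LocallyLipschitz (gradient φ))
    (hpd : ∀ x u : EuclideanSpace ℝ (Fin n), u ≠ 0 → ⟪gradient φ x, u⟫ = 0 →
      ∃ z : EuclideanSpace ℝ (Fin n), 0 < ⟪z, u⟫ ∧
        (z ∈ FrechetSubdiff (fun y => ⟪u, gradient φ y⟫) x ∨
         -z ∈ FrechetSubdiff (fun y => ⟪-u, gradient φ y⟫) x)) :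
    ∀ x y : EuclideanSpace ℝ (Fin n), x ≠ y → ∀ lam ∈ Set.Ioo (0:ℝ) 1,
      φ ((1 - lam) • x + lam • y) < max (φ x) (φ y) := by
  intro x y hxy lam hlam
  by_contra hcon
  push_neg at hcon
  set u : EuclideanSpace ℝ (Fin n) := y - x with hu
  have hune : u ≠ 0 := sub_ne_zero.mpr (Ne.symm hxy)
  have hunorm : (0:ℝ) < ‖u‖ := norm_pos_iff.mpr hune
  set g : ℝ → ℝ := fun t => φ (x + t • u) with hg
  have hderiv : ∀ t : ℝ, HasDerivAt g ⟪gradient φ (x + t • u), u⟫ t := by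
    intro t
    have h1 : HasFDerivAt φ ((InnerProductSpace.toDual ℝ _) (gradient φ (x + t • u)))
        (x + t • u) := hasGradientAt_iff_hasFDerivAt.mp (hφ _).hasGradientAt
    have h2 : HasDerivAt (fun t : ℝ => x + t • u) u t := by
      simpa using ((hasDerivAt_id t).smul_const u).const_add x
    have h3 := h1.comp_hasDerivAt t h2
    rw [InnerProductSpace.toDual_apply_apply] at h3
    exact h3
  have hgc : Continuous g := by
    apply hφ.continuous.comp
    exact continuous_const.add (continuous_id.smul continuous_const)
  have hg0 : g 0 = φ x := by simp [hg]
  have hg1 : g 1 = φ y := by simp [hg, hu]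
  have hglam : g lam = φ ((1 - lam) • x + lam • y) := by
    simp only [hg]
    congr 1
    module
  rw [← hg0, ← hg1, ← hglam] at hcon
  -- get an interior maximizer
  obtain ⟨c, hc, hcmax⟩ := isCompact_Icc.exists_isMaxOn (Set.nonempty_Icc.mpr zero_le_one)
    hgc.continuousOn
  obtain ⟨t, ht, htmax⟩ : ∃ t, t ∈ Set.Ioo (0:ℝ) 1 ∧ ∀ w ∈ Set.Icc (0:ℝ) 1, g w ≤ g t := by
    by_cases hc' : c ∈ Set.Ioo (0:ℝ) 1
    · exact ⟨c, hc', hcmax⟩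
    · refine ⟨lam, hlam, fun w hw => ?_⟩
      have h1 : g c ≤ g lam := by
        have : c = 0 ∨ c = 1 := by
          rcases hc.1.lt_or_eq with h | h
          · rcases hc.2.lt_or_eq with h' | h'
            · exact absurd ⟨h, h'⟩ hc'
            · exact Or.inr h'
          · exact Or.inl h.symm
        rcases this with rfl | rfl
        · exact le_trans (le_max_left _ _) hcon
        · exact le_trans (le_max_right _ _) hcon
      exact le_trans (hcmax hw) h1
  -- derivative vanishes at the maximizer
  have hloc : IsLocalMax g t :=
    Filter.eventually_of_mem (Icc_mem_nhds ht.1 ht.2) htmax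
  have hd0 : ⟪gradient φ (x + t • u), u⟫ = 0 := hloc.hasDerivAt_eq_zero (hderiv t)
  obtain ⟨z, hz, hcase⟩ := hpd (x + t • u) u hune hd0
  set C : ℝ := ⟪z, u⟫ with hC
  set ε : ℝ := C / (2 * ‖u‖) with hε
  have hεpos : 0 < ε := div_pos hz (by positivity)
  have hεnorm : ε * ‖u‖ = C / 2 := by
    field_simp [hε]
    rw [hε]
    field_simp
  rcases hcase with hs | hs
  · -- derivative positive just after t
    have hev := hs ε hεpos
    have hmap : Filter.Tendsto (fun s : ℝ => x + s • u) (nhds t) (nhds (x + t • u)) :=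
      (continuous_const.add (continuous_id.smul continuous_const)).continuousAt
    have hev2 := hmap.eventually hev
    obtain ⟨δ, hδpos, hδ⟩ := Metric.eventually_nhds_iff.mp hev2
    set b : ℝ := min (t + δ) 1 with hb
    have htb : t < b := lt_min (by linarith) ht.2
    have hb1 : b ≤ 1 := min_le_right _ _
    have hb0 : 0 ≤ b := le_of_lt (lt_trans ht.1 htb)
    have hpos : ∀ s ∈ Set.Ioo t b, 0 < ⟪gradient φ (x + s • u), u⟫ := by
      intro s hsmem
      have hst : dist s t < δ := by
        rw [Real.dist_eq, abs_of_pos (by linarith [hsmem.1])]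
        have : s < t + δ := lt_of_lt_of_le hsmem.2 (min_le_left _ _)
        linarith
      have hineq := hδ hst
      beta_reduce at hineq
      have heq1 : (x + s • u) - (x + t • u) = (s - t) • u := by module
      rw [heq1] at hineq
      have hn : ‖(s - t) • u‖ = (s - t) * ‖u‖ := by
        rw [norm_smul, Real.norm_eq_abs, abs_of_pos (by linarith [hsmem.1])]
      have hin : ⟪z, (s - t) • u⟫ = (s - t) * C := real_inner_smul_right z u (s - t)
      have hcomm : ⟪u, gradient φ (x + t • u)⟫ = 0 := by
        rw [real_inner_comm]; exact hd0
      rw [hn, hin, hcomm] at hineq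
      have h3 : ε * ((s - t) * ‖u‖) = (s - t) * (C / 2) := by
        calc ε * ((s - t) * ‖u‖) = (s - t) * (ε * ‖u‖) := by ring
          _ = (s - t) * (C / 2) := by rw [hεnorm]
      have h4 : 0 < (s - t) * (C / 2) := mul_pos (sub_pos.mpr hsmem.1) (half_pos hz)
      have hfin : 0 < ⟪u, gradient φ (x + s • u)⟫ := by linarith
      rwa [real_inner_comm] at hfin
    have hmono : StrictMonoOn g (Set.Icc t b) := by
      apply strictMonoOn_of_deriv_pos (convex_Icc t b) hgc.continuousOn
      intro s hsmem
      rw [interior_Icc] at hsmem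
      rw [(hderiv s).deriv]
      exact hpos s hsmem
    have h1 : g t < g b := hmono (Set.left_mem_Icc.mpr htb.le) (Set.right_mem_Icc.mpr htb.le) htb
    have h2 : g b ≤ g t := htmax b ⟨hb0, hb1⟩
    linarith
  · -- derivative negative just before t
    have hev := hs ε hεpos
    have hmap : Filter.Tendsto (fun s : ℝ => x + s • u) (nhds t) (nhds (x + t • u)) :=
      (continuous_const.add (continuous_id.smul continuous_const)).continuousAt
    have hev2 := hmap.eventually hev
    obtain ⟨δ, hδpos, hδ⟩ := Metric.eventually_nhds_iff.mp hev2
    set a : ℝ := max (t - δ) 0 with ha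
    have hat : a < t := max_lt (by linarith) ht.1
    have ha0 : 0 ≤ a := le_max_right _ _
    have ha1 : a ≤ 1 := le_of_lt (lt_trans hat ht.2)
    have hneg : ∀ s ∈ Set.Ioo a t, ⟪gradient φ (x + s • u), u⟫ < 0 := by
      intro s hsmem
      have hst : dist s t < δ := by
        rw [Real.dist_eq, abs_of_neg (by linarith [hsmem.2])]
        have : t - δ < s := lt_of_le_of_lt (le_max_left _ _) hsmem.1
        linarith
      have hineq := hδ hst
      beta_reduce at hineq
      have heq1 : (x + s • u) - (x + t • u) = (s - t) • u := by module
      rw [heq1] at hineq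
      have hn : ‖(s - t) • u‖ = (t - s) * ‖u‖ := by
        rw [norm_smul, Real.norm_eq_abs, abs_of_neg (by linarith [hsmem.2])]
        ring
      have hin : ⟪-z, (s - t) • u⟫ = -((s - t) * C) := by
        rw [inner_neg_left, real_inner_smul_right]
      have hcomm : ⟪-u, gradient φ (x + t • u)⟫ = 0 := by
        rw [inner_neg_left, real_inner_comm]
        simp [hd0]
      rw [hn, hin, hcomm] at hineq
      have hval : ⟪-u, gradient φ (x + s • u)⟫ = -⟪u, gradient φ (x + s • u)⟫ :=
        inner_neg_left u _
      rw [hval] at hineq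
      have h3 : ε * ((t - s) * ‖u‖) = (t - s) * (C / 2) := by
        calc ε * ((t - s) * ‖u‖) = (t - s) * (ε * ‖u‖) := by ring
          _ = (t - s) * (C / 2) := by rw [hεnorm]
      have h4 : 0 < (t - s) * (C / 2) := mul_pos (sub_pos.mpr hsmem.2) (half_pos hz)
      have hfin : ⟪u, gradient φ (x + s • u)⟫ < 0 := by linarith
      rwa [real_inner_comm] at hfin
    have hanti : StrictAntiOn g (Set.Icc a t) := by
      apply strictAntiOn_of_deriv_neg (convex_Icc a t) hgc.continuousOn
      intro s hsmem
      rw [interior_Icc] at hsmem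
      rw [(hderiv s).deriv]
      exact hneg s hsmem
    have h1 : g t < g a := hanti (Set.left_mem_Icc.mpr hat.le) (Set.right_mem_Icc.mpr hat.le) hat
    have h2 : g a ≤ g t := htmax a ⟨ha0, ha1⟩
    linarith
end

section
/- Let φ : ℝⁿ → ℝ be a C^{1,1} function and x ∈ ℝⁿ. If for every nonzero u ∈ ℝⁿ both the Fréchet subdifferential of y ↦ ⟨u, ∇φ(y)⟩ at x and the Fréchet subdifferential of y ↦ ⟨-u, ∇φ(y)⟩ at x are nonempty, then ∇φ is differentiable at x (so φ is twice differentiable at x). -/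
local notation "⟪" x ", " y "⟫" => (inner ℝ x y : ℝ)

lemma key_s14 {E : Type*} [NormedAddCommGroup E] [InnerProductSpace ℝ E]
    (g : E → ℝ) (x : E) (z w : E)
    (hz : z ∈ FrechetSubdiff g x) (hw : w ∈ FrechetSubdiff (fun y => -(g y)) x) :
    HasFDerivAt g (innerSL ℝ z) x := by
  have hsum : z + w = 0 := by
    by_contra hv
    have hvpos : (0:ℝ) < ‖z + w‖ := norm_pos_iff.mpr hv
    have h1 := hz (‖z + w‖/4) (by positivity)
    have h2 := hw (‖z + w‖/4) (by positivity)
    have h3 := h1.and h2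
    rw [Metric.eventually_nhds_iff] at h3
    obtain ⟨δ, hδ, hδ'⟩ := h3
    set t : ℝ := δ/(2*‖z + w‖) with ht
    have htpos : 0 < t := by positivity
    set y : E := x + t • (z + w) with hy
    have hyx : y - x = t • (z + w) := by simp [hy]
    have hnorm : ‖y - x‖ = δ/2 := by
      rw [hyx, norm_smul, Real.norm_eq_abs, abs_of_pos htpos, ht]
      field_simp
    have hdist : dist y x < δ := by
      rw [dist_eq_norm, hnorm]; linarith
    obtain ⟨e1, e2⟩ := hδ' hdist
    have hinner : ⟪z, y - x⟫ + ⟪w, y - x⟫ = t * ‖z + w‖^2 := by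
      rw [← inner_add_left, hyx, real_inner_smul_right, real_inner_self_eq_norm_sq]
    have ht2 : t * ‖z + w‖^2 = δ * ‖z + w‖ / 2 := by
      rw [ht]; field_simp
    rw [hnorm] at e1 e2
    nlinarith [hinner, ht2]
  have hvw : w = -z := by rw [add_comm] at hsum; exact eq_neg_of_add_eq_zero_left hsum
  apply HasFDerivAt.of_isLittleO
  rw [Asymptotics.isLittleO_iff]
  intro c hc
  have h1 := hz c hc
  have h2 := hw c hc
  filter_upwards [h1, h2] with y e1 e2
  rw [hvw] at e2
  simp only [inner_neg_left] at e2
  rw [Real.norm_eq_abs, abs_le]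
  constructor
  · simpa using e1
  · simp only [innerSL_apply_apply, Real.norm_eq_abs]
    nlinarith [norm_nonneg (y - x)]

theorem stmt_14 (n : ℕ) (φ : EuclideanSpace ℝ (Fin n) → ℝ)
    (hφ : Differentiable ℝ φ) (hlip : LocallyLipschitz (gradient φ))
    (x : EuclideanSpace ℝ (Fin n))
    (h : ∀ u : EuclideanSpace ℝ (Fin n), u ≠ 0 →
      (FrechetSubdiff (fun y => ⟪u, gradient φ y⟫) x).Nonempty ∧
      (FrechetSubdiff (fun y => ⟪-u, gradient φ y⟫) x).Nonempty) :
    DifferentiableAt ℝ (gradient φ) x := by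
  have hcomp : ∀ i : Fin n, DifferentiableAt ℝ (fun y => gradient φ y i) x := by
    intro i
    have hu : (EuclideanSpace.single i (1:ℝ)) ≠ 0 := by
      intro hh
      have := congrArg (fun v => v i) hh
      simp [EuclideanSpace.single_apply] at this
    obtain ⟨⟨z, hz⟩, ⟨w, hw⟩⟩ := h _ hu
    have hfun : (fun y => ⟪-(EuclideanSpace.single i (1:ℝ)), gradient φ y⟫)
        = fun y => -(⟪EuclideanSpace.single i (1:ℝ), gradient φ y⟫) := by
      funext y; rw [inner_neg_left]
    rw [hfun] at hw
    have hd := (key_s14 _ x z w hz hw).differentiableAt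
    have heq : (fun y => ⟪EuclideanSpace.single i (1:ℝ), gradient φ y⟫)
        = fun y => gradient φ y i := by
      funext y
      rw [EuclideanSpace.inner_single_left]; simp only [map_one, one_mul]
    rwa [heq] at hd
  have hpi : DifferentiableAt ℝ (fun y => (fun i => gradient φ y i : Fin n → ℝ)) x :=
    differentiableAt_pi.mpr hcomp
  exact ((PiLp.continuousLinearEquiv 2 ℝ (fun _ : Fin n => ℝ)).symm.differentiableAt.comp x hpi : _)
end

section
/- Define φ : ℝ → ℝ by φ(x) = ∫₀ˣ ϕ(t) dt where ϕ(t) = -2t² + t² sin(1/t) for t > 0, ϕ(0) = 0, and ϕ(t) = 2t² + t² sin(1/t) for t < 0. Then φ is differentiable with locally Lipschitz derivative ϕ, and φ is not quasiconvex: for x = 1/π and y = -1/π one has ∇φ(x)(y - x) = 4/π³ > 0. -/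
local notation "⟪" x ", " y "⟫" => (inner x y : ℝ)

noncomputable def psi : ℝ → ℝ := fun t => -2 * t * |t| + t ^ 2 * Real.sin (1 / t)

noncomputable def psi' : ℝ → ℝ := fun t =>
  if 0 < t then -4 * t + 2 * t * Real.sin (1 / t) - Real.cos (1 / t)
  else if t < 0 then 4 * t + 2 * t * Real.sin (1 / t) - Real.cos (1 / t) else 0

lemma psi_zero : psi 0 = 0 := by simp [psi]

lemma hasDerivAt_psi (t : ℝ) : HasDerivAt psi (psi' t) t := by
  rcases lt_trichotomy t 0 with ht | ht | ht
  · -- t < 0 : near t, psi s = 2*s^2 + s^2*sin(1/s)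
    have ht' : t ≠ 0 := ne_of_lt ht
    have h1 : HasDerivAt (fun s : ℝ => 1 / s) (-(1 / t ^ 2)) t := by
      simpa [one_div] using hasDerivAt_inv ht'
    have hsin : HasDerivAt (fun s : ℝ => Real.sin (1 / s))
        (Real.cos (1 / t) * -(1 / t ^ 2)) t :=
      (Real.hasDerivAt_sin (1 / t)).comp t h1
    have hsq : HasDerivAt (fun s : ℝ => s ^ 2) (2 * t) t := by
      simpa using hasDerivAt_pow 2 t
    have hprod : HasDerivAt (fun s : ℝ => s ^ 2 * Real.sin (1 / s))
        (2 * t * Real.sin (1 / t) + t ^ 2 * (Real.cos (1 / t) * -(1 / t ^ 2))) t :=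
      hsq.mul hsin
    have htot : HasDerivAt (fun s : ℝ => 2 * s ^ 2 + s ^ 2 * Real.sin (1 / s))
        (2 * (2 * t) + (2 * t * Real.sin (1 / t) + t ^ 2 * (Real.cos (1 / t) * -(1 / t ^ 2)))) t :=
      (hsq.const_mul 2).add hprod
    have heq : psi =ᶠ[nhds t] fun s : ℝ => 2 * s ^ 2 + s ^ 2 * Real.sin (1 / s) := by
      filter_upwards [isOpen_Iio.eventually_mem (show t ∈ Set.Iio (0:ℝ) from ht)] with s hs
      have : |s| = -s := abs_of_neg hs
      simp only [psi, this]; ring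
    have := htot.congr_of_eventuallyEq heq
    refine this.congr_deriv ?_
    simp only [psi', if_neg (asymm ht), if_pos ht]
    field_simp
    ring
  · -- t = 0
    subst ht
    rw [hasDerivAt_iff_tendsto_slope]
    have hb : ∀ᶠ s in nhdsWithin (0:ℝ) {(0:ℝ)}ᶜ, ‖slope psi 0 s‖ ≤ 3 * |s| := by
      filter_upwards [self_mem_nhdsWithin] with s hs
      have hs0 : s ≠ 0 := hs
      have : slope psi 0 s = psi s / s := by
        simp [slope_def_field, psi_zero, div_eq_iff hs0]
      rw [this]
      have habs : |psi s| ≤ 3 * s ^ 2 := by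
        have hss : s * |s| ≤ s ^ 2 ∧ -(s ^ 2) ≤ s * |s| := by
          have e1 : (0:ℝ) ≤ (|s| - s) * |s| :=
            mul_nonneg (sub_nonneg.mpr (le_abs_self s)) (abs_nonneg s)
          have e2 : (0:ℝ) ≤ (s - -|s|) * |s| :=
            mul_nonneg (sub_nonneg.mpr (neg_abs_le s)) (abs_nonneg s)
          have e3 : |s| * |s| = s ^ 2 := by
            rw [← sq_abs]; ring
          constructor <;> nlinarith [e1, e2, e3]
        have h2 : s ^ 2 * Real.sin (1 / s) ≤ s ^ 2 ∧
            -(s ^ 2) ≤ s ^ 2 * Real.sin (1 / s) := by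
          constructor
          · nlinarith [Real.sin_le_one (1 / s), sq_nonneg s]
          · nlinarith [Real.neg_one_le_sin (1 / s), sq_nonneg s]
        rw [abs_le]
        constructor <;> (simp only [psi]; nlinarith [hss.1, hss.2, h2.1, h2.2])
      rw [Real.norm_eq_abs, abs_div, div_le_iff₀ (abs_pos.mpr hs0)]
      calc |psi s| ≤ 3 * s ^ 2 := habs
        _ = 3 * |s| * |s| := by rw [← sq_abs]; ring
    have hg : Filter.Tendsto (fun s : ℝ => 3 * |s|) (nhdsWithin (0:ℝ) {(0:ℝ)}ᶜ) (nhds 0) := by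
      have : Filter.Tendsto (fun s : ℝ => 3 * |s|) (nhds (0:ℝ)) (nhds (3 * |(0:ℝ)|)) :=
        (continuous_const.mul continuous_abs).tendsto 0
      simpa using this.mono_left nhdsWithin_le_nhds
    have := squeeze_zero_norm' hb hg
    simpa [psi', lt_irrefl] using this
  · -- 0 < t
    have ht' : t ≠ 0 := ne_of_gt ht
    have h1 : HasDerivAt (fun s : ℝ => 1 / s) (-(1 / t ^ 2)) t := by
      simpa [one_div] using hasDerivAt_inv ht'
    have hsin : HasDerivAt (fun s : ℝ => Real.sin (1 / s))
        (Real.cos (1 / t) * -(1 / t ^ 2)) t :=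
      (Real.hasDerivAt_sin (1 / t)).comp t h1
    have hsq : HasDerivAt (fun s : ℝ => s ^ 2) (2 * t) t := by
      simpa using hasDerivAt_pow 2 t
    have hprod : HasDerivAt (fun s : ℝ => s ^ 2 * Real.sin (1 / s))
        (2 * t * Real.sin (1 / t) + t ^ 2 * (Real.cos (1 / t) * -(1 / t ^ 2))) t :=
      hsq.mul hsin
    have htot : HasDerivAt (fun s : ℝ => -2 * s ^ 2 + s ^ 2 * Real.sin (1 / s))
        ((-2) * (2 * t) + (2 * t * Real.sin (1 / t) + t ^ 2 * (Real.cos (1 / t) * -(1 / t ^ 2)))) t := by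
      have := (hsq.const_mul (-2 : ℝ)).add hprod
      exact this.congr_deriv (by ring)
    have heq : psi =ᶠ[nhds t] fun s : ℝ => -2 * s ^ 2 + s ^ 2 * Real.sin (1 / s) := by
      filter_upwards [isOpen_Ioi.eventually_mem (show t ∈ Set.Ioi (0:ℝ) from ht)] with s hs
      have : |s| = s := abs_of_pos hs
      simp only [psi, this]; ring
    have := htot.congr_of_eventuallyEq heq
    refine this.congr_deriv ?_
    simp only [psi', if_pos ht]
    field_simp
    ring

lemma psi'_bound (t : ℝ) : |psi' t| ≤ 6 * |t| + 1 := by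
  have h1 := Real.abs_sin_le_one (1 / t)
  have h2 := Real.abs_cos_le_one (1 / t)
  have h3 : |2 * t * Real.sin (1 / t)| ≤ 2 * |t| := by
    rw [abs_mul, abs_mul]
    simp only [abs_two]
    nlinarith [abs_nonneg t]
  rcases lt_trichotomy t 0 with ht | ht | ht
  · simp only [psi', if_neg (asymm ht), if_pos ht]
    have habs : |t| = -t := abs_of_neg ht
    calc |4 * t + 2 * t * Real.sin (1 / t) - Real.cos (1 / t)|
        ≤ |4 * t| + |2 * t * Real.sin (1 / t)| + |Real.cos (1 / t)| := by
          apply (abs_sub _ _).trans; gcongr; exact abs_add_le _ _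
      _ ≤ 4 * |t| + 2 * |t| + 1 := by
          rw [abs_mul, abs_of_nonneg (by norm_num : (0:ℝ) ≤ 4)]; gcongr
      _ ≤ 6 * |t| + 1 := by linarith
  · simp [psi', ht]
  · simp only [psi', if_pos ht]
    calc |(-4) * t + 2 * t * Real.sin (1 / t) - Real.cos (1 / t)|
        ≤ |(-4) * t| + |2 * t * Real.sin (1 / t)| + |Real.cos (1 / t)| := by
          apply (abs_sub _ _).trans; gcongr; exact abs_add_le _ _
      _ ≤ 4 * |t| + 2 * |t| + 1 := by
          have : |(-4 : ℝ) * t| = 4 * |t| := by rw [abs_mul]; norm_num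
          rw [this]; gcongr
      _ ≤ 6 * |t| + 1 := by linarith

lemma continuous_psi : Continuous psi :=
  continuous_iff_continuousAt.mpr fun t => (hasDerivAt_psi t).continuousAt

theorem stmt_15 (ϕ : ℝ → ℝ)
    (hϕ : ∀ t : ℝ, ϕ t =
      if 0 < t then -2 * t ^ 2 + t ^ 2 * Real.sin (1 / t)
      else if t < 0 then 2 * t ^ 2 + t ^ 2 * Real.sin (1 / t) else 0)
    (φ : ℝ → ℝ) (hφ : ∀ x : ℝ, φ x = ∫ t in (0:ℝ)..x, ϕ t) :
    Differentiable ℝ φ ∧ (∀ x : ℝ, deriv φ x = ϕ x) ∧ LocallyLipschitz ϕ ∧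
    ¬ (∀ x y : ℝ, ∀ lam ∈ Set.Icc (0:ℝ) 1,
        φ ((1 - lam) * x + lam * y) ≤ max (φ x) (φ y)) ∧
    deriv φ (1 / Real.pi) * (-(1 / Real.pi) - 1 / Real.pi) = 4 / Real.pi ^ 3 ∧
    (0:ℝ) < 4 / Real.pi ^ 3 := by
  have hϕψ : ϕ = psi := by
    funext t
    rw [hϕ t]
    rcases lt_trichotomy t 0 with ht | ht | ht
    · rw [if_neg (asymm ht), if_pos ht]
      simp [psi, abs_of_neg ht]; ring
    · simp [ht, psi]
    · rw [if_pos ht]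
      simp [psi, abs_of_pos ht]; ring
  have hϕcont : Continuous ϕ := hϕψ ▸ continuous_psi
  have hφfun : φ = fun x => ∫ t in (0:ℝ)..x, ϕ t := funext hφ
  have hderiv : ∀ x : ℝ, deriv φ x = ϕ x := by
    intro x
    rw [hφfun]
    exact Continuous.deriv_integral ϕ hϕcont 0 x
  have hdiff : Differentiable ℝ φ := by
    intro x
    rw [hφfun]
    exact (hϕcont.integral_hasStrictDerivAt 0 x).hasDerivAt.differentiableAt
  refine ⟨hdiff, hderiv, ?_, ?_, ?_, ?_⟩
  · -- LocallyLipschitz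
    rw [hϕψ]
    intro x
    set C : ℝ := 6 * (|x| + 1) + 1 with hC
    have hC0 : 0 ≤ C := by positivity
    refine ⟨C.toNNReal, Metric.ball x 1, Metric.ball_mem_nhds x one_pos, ?_⟩
    apply (convex_ball x 1).lipschitzOnWith_of_nnnorm_hasDerivWithin_le
      (f' := psi') (fun t _ => (hasDerivAt_psi t).hasDerivWithinAt)
    intro t ht
    have htx : |t| ≤ |x| + 1 := by
      have : |t - x| < 1 := by simpa [Real.dist_eq] using ht
      calc |t| = |x + (t - x)| := by ring_nf
        _ ≤ |x| + |t - x| := abs_add_le _ _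
        _ ≤ |x| + 1 := by linarith
    rw [← NNReal.coe_le_coe, coe_nnnorm, Real.coe_toNNReal _ hC0, Real.norm_eq_abs]
    calc |psi' t| ≤ 6 * |t| + 1 := psi'_bound t
      _ ≤ C := by rw [hC]; linarith
  · -- not quasiconvex
    intro h
    have h0 := h 1 (-1) (1/2) ⟨by norm_num, by norm_num⟩
    have he : (1 - 1/2 : ℝ) * 1 + (1/2) * (-1) = 0 := by norm_num
    rw [he] at h0
    have hφ0 : φ 0 = 0 := by rw [hφ]; simp
    have hint : ∀ a b : ℝ, IntervalIntegrable ϕ MeasureTheory.volume a b :=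
      fun a b => hϕcont.intervalIntegrable a b
    have hφ1 : φ 1 ≤ -(1/3) := by
      rw [hφ]
      have hle : ∀ t ∈ Set.Icc (0:ℝ) 1, ϕ t ≤ -t ^ 2 := by
        intro t ht
        rw [hϕ t]
        rcases eq_or_lt_of_le ht.1 with h | h
        · simp [← h]
        · rw [if_pos h]
          nlinarith [Real.sin_le_one (1 / t), sq_nonneg t]
      have := intervalIntegral.integral_mono_on (by norm_num : (0:ℝ) ≤ 1)
        (hint 0 1) (((continuous_pow 2).neg).intervalIntegrable 0 1) hle
      have hval : (∫ t in (0:ℝ)..1, -t ^ 2) = -(1/3) := by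
        rw [intervalIntegral.integral_neg]
        rw [integral_pow]
        norm_num
      linarith [hval ▸ this]
    have hφm1 : φ (-1) ≤ -(1/3) := by
      rw [hφ]
      rw [intervalIntegral.integral_symm]
      simp only [neg_le]
      have hle : ∀ t ∈ Set.Icc (-1:ℝ) 0, t ^ 2 ≤ ϕ t := by
        intro t ht
        rw [hϕ t]
        rcases eq_or_lt_of_le ht.2 with h | h
        · simp [h]
        · rw [if_neg (asymm h), if_pos h]
          nlinarith [Real.neg_one_le_sin (1 / t), sq_nonneg t]
      have := intervalIntegral.integral_mono_on (by norm_num : (-1:ℝ) ≤ 0)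
        ((continuous_pow 2).intervalIntegrable (-1) 0) (hint (-1) 0) hle
      have hval : (∫ t in (-1:ℝ)..0, t ^ 2) = 1/3 := by
        rw [integral_pow]
        norm_num
      rw [hval] at this
      linarith
    rw [hφ0] at h0
    have := max_le hφ1 hφm1
    have := le_trans h0 (max_le hφ1 hφm1)
    linarith
  · -- computation
    rw [hderiv, hϕ]
    have hπ : (0:ℝ) < 1 / Real.pi := by positivity
    rw [if_pos hπ, one_div_one_div, Real.sin_pi]
    have hπ0 : Real.pi ≠ 0 := Real.pi_ne_zero
    field_simp
    ring
  · positivity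
end

section
/- Define φ : ℝ → ℝ by φ(x) = x²/2 for x ≤ 0 and φ(x) = 3x² for x > 0. Then φ is differentiable with Lipschitz derivative ∇φ(x) = x for x ≤ 0 and ∇φ(x) = 6x for x > 0; the Fréchet subdifferential of y ↦ u·∇φ(y) at 0 equals [u, 6u] if u ≥ 0 and is empty if u < 0; and φ is strictly pseudoconvex. -/
local notation "⟪" x ", " y "⟫" => (inner ℝ x y : ℝ)

theorem stmt_16 (φ : ℝ → ℝ)
    (hφdef : ∀ x : ℝ, φ x = if x ≤ 0 then x ^ 2 / 2 else 3 * x ^ 2) :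
    Differentiable ℝ φ ∧
    (∀ x : ℝ, deriv φ x = if x ≤ 0 then x else 6 * x) ∧
    LipschitzWith 6 (deriv φ) ∧
    (∀ u : ℝ, 0 ≤ u →
      FrechetSubdiff (fun y => u * deriv φ y) 0 = Set.Icc u (6 * u)) ∧
    (∀ u : ℝ, u < 0 → FrechetSubdiff (fun y => u * deriv φ y) 0 = ∅) ∧
    (∀ x y : ℝ, x ≠ y → φ y ≤ φ x → deriv φ x * (y - x) < 0) := by
  have hderiv : ∀ x : ℝ, HasDerivAt φ (if x ≤ 0 then x else 6 * x) x := by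
    intro x
    rcases lt_trichotomy x 0 with hx | hx | hx
    · have h1 : HasDerivAt (fun y : ℝ => y ^ 2 / 2) x x := by
        simpa using (hasDerivAt_pow 2 x).div_const 2
      have heq : φ =ᶠ[nhds x] fun y => y ^ 2 / 2 := by
        filter_upwards [Iio_mem_nhds hx] with y hy
        rw [hφdef]; simp [le_of_lt (Set.mem_Iio.1 hy)]
      rw [if_pos hx.le]
      exact h1.congr_of_eventuallyEq heq
    · subst hx
      rw [if_pos le_rfl]
      rw [hasDerivAt_iff_isLittleO]
      have hφ0 : φ 0 = 0 := by rw [hφdef]; norm_num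
      simp only [hφ0, sub_zero, smul_zero, Asymptotics.isLittleO_iff]
      intro c hc
      filter_upwards [Metric.ball_mem_nhds (0:ℝ) (by positivity : (0:ℝ) < c/3)] with y hy
      rw [Real.norm_eq_abs, Real.norm_eq_abs]
      simp only [Metric.mem_ball, Real.dist_eq, sub_zero] at hy
      rw [hφdef]
      rcases le_or_gt y 0 with h | h
      · rw [if_pos h, abs_of_nonneg (by positivity)]
        nlinarith [abs_nonneg y, sq_abs y, neg_abs_le y, le_abs_self y]
      · rw [if_neg (not_le.2 h), abs_of_nonneg (by positivity)]
        nlinarith [abs_of_pos h]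
    · have h1 : HasDerivAt (fun y : ℝ => 3 * y ^ 2) (6 * x) x := by
        have := (hasDerivAt_pow 2 x).const_mul 3
        exact this.congr_deriv (by norm_num; ring)
      have heq : φ =ᶠ[nhds x] fun y => 3 * y ^ 2 := by
        filter_upwards [Ioi_mem_nhds hx] with y hy
        rw [hφdef]; simp [not_le.2 (Set.mem_Ioi.1 hy)]
      rw [if_neg (not_le.2 hx)]
      exact h1.congr_of_eventuallyEq heq
  have hdiff : Differentiable ℝ φ := fun x => (hderiv x).differentiableAt
  have hg : ∀ x : ℝ, deriv φ x = if x ≤ 0 then x else 6 * x := fun x => (hderiv x).deriv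
  have hlip : LipschitzWith 6 (deriv φ) := by
    apply LipschitzWith.of_dist_le_mul
    intro x y
    rw [Real.dist_eq, Real.dist_eq, hg, hg]
    push_cast
    split_ifs with hx hy hy <;> (try push_neg at *) <;> rw [abs_le] <;>
      rcases abs_cases (x - y) with ⟨h1, h2⟩ | ⟨h1, h2⟩ <;> rw [h1] <;>
      constructor <;> linarith
  have hsub : ∀ u : ℝ, FrechetSubdiff (fun y => u * deriv φ y) 0 = Set.Icc u (6 * u) := by
    intro u
    have hg0 : deriv φ 0 = 0 := by rw [hg]; simp
    ext z
    simp only [FrechetSubdiff, Set.mem_setOf_eq, Set.mem_Icc, sub_zero, hg0, mul_zero,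
      RCLike.inner_apply, starRingEnd_apply, star_trivial, Real.norm_eq_abs]
    constructor
    · intro h
      constructor
      · by_contra hz
        push_neg at hz
        obtain ⟨δ, hδ, hball⟩ := Metric.eventually_nhds_iff.1 (h ((u - z)/2) (by linarith))
        have := hball (y := -δ/2) (by rw [Real.dist_eq]; rw [abs_of_neg (by linarith)]; linarith)
        rw [hg (-δ/2), if_pos (by linarith), abs_of_neg (by linarith)] at this
        nlinarith
      · by_contra hz
        push_neg at hz
        obtain ⟨δ, hδ, hball⟩ := Metric.eventually_nhds_iff.1 (h ((z - 6*u)/2) (by linarith))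
        have := hball (y := δ/2) (by rw [Real.dist_eq]; rw [abs_of_pos (by linarith)]; linarith)
        rw [hg (δ/2), if_neg (by push_neg; linarith), abs_of_pos (by linarith)] at this
        nlinarith
    · rintro ⟨h1, h2⟩ ε hε
      filter_upwards with y
      rw [hg y]
      rcases le_or_gt y 0 with hy | hy
      · rw [if_pos hy]
        nlinarith [neg_abs_le y, abs_nonneg y, mul_nonneg (le_of_lt hε) (abs_nonneg y)]
      · rw [if_neg (not_le.2 hy)]
        nlinarith [le_abs_self y, abs_nonneg y, mul_nonneg (le_of_lt hε) (abs_nonneg y)]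
  refine ⟨hdiff, hg, hlip, fun u _ => hsub u, fun u hu => ?_, ?_⟩
  · rw [hsub u, Set.Icc_eq_empty]
    rw [not_le]; linarith
  · intro x y hxy hle
    rw [hφdef, hφdef] at hle
    rw [hg]
    rcases lt_trichotomy x 0 with hx | hx | hx
    · rw [if_pos hx.le] at *
      rcases le_or_gt y 0 with hy | hy
      · rw [if_pos hy] at hle
        rcases lt_or_gt_of_ne hxy with h | h
        · nlinarith
        · nlinarith
      · rw [if_neg (not_le.2 hy)] at hle
        nlinarith
    · subst hx
      exfalso
      simp only [le_rfl, if_pos] at hle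
      rcases le_or_gt y 0 with hy | hy
      · rw [if_pos hy] at hle
        rcases lt_or_eq_of_le hy with h | h
        · nlinarith
        · exact hxy h.symm
      · rw [if_neg (not_le.2 hy)] at hle
        nlinarith
    · rw [if_neg (not_le.2 hx)] at *
      rcases le_or_gt y 0 with hy | hy
      · rw [if_pos hy] at hle
        nlinarith
      · rw [if_neg (not_le.2 hy)] at hle
        rcases lt_or_gt_of_ne hxy with h | h
        · nlinarith
        · nlinarith
end
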